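/- arXiv:math/0601600 — 10 statements merged into one kernel-verified Lean document; each statement's English description precedes it below -/
import Mathlib

section
/- Let p(z) = ∑_{k=0}^{n} a_k z^k be a complex polynomial of degree n ≥ 1 (so a_n ≠ 0). If all the zeros of p lie on the unit circle, then a_k · conj(a_0) = a_n · conj(a_{n-k}) for every k with 0 ≤ k ≤ n-1. -/
/-!
Factor `p = aₙ ∏ (X - r)` over its roots. Reversing a factor `X - c` gives `1 - cX = -c (X - c⁻¹)`,
so the reversal of a polynomial with nonzero roots is `p(0) ∏ (X - r⁻¹)`. For `p̄` (conjugate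
coefficients) the roots are the `r̄`, and `r̄⁻¹ = r` on the unit circle; hence
`aₙ · reverse p̄ = conj a₀ · p`, and comparing coefficients of `Xᵏ` gives the identity.
-/

open Polynomial

namespace Polynomial

theorem reverse_multiset_prod {R : Type*} [CommSemiring R] [NoZeroDivisors R]
    (m : Multiset R[X]) : m.prod.reverse = (m.map reverse).prod := by
  induction m using Multiset.induction with
  | empty => simpa using reverse_C (1 : R)
  | cons f m ih => simp [ih]

theorem reverse_X_sub_C {R : Type*} [CommRing R] [Nontrivial R] (c : R) :
    (X - C c).reverse = 1 - C c * X := by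
  rw [sub_eq_add_neg, ← C_neg, reverse_add_C, natDegree_X, pow_one, C_neg, neg_mul,
    ← sub_eq_add_neg, show (X : R[X]).reverse = 1 by
      rw [← one_mul X, reverse_mul_X, ← C_1, reverse_C]]

theorem reverse_X_sub_C_of_ne_zero {K : Type*} [Field K] {c : K} (hc : c ≠ 0) :
    (X - C c).reverse = C (-c) * (X - C c⁻¹) := by
  rw [reverse_X_sub_C, mul_sub, ← C_mul, neg_mul, mul_inv_cancel₀ hc]
  simp only [map_neg, map_one]
  ring

theorem Splits.reverse_eq_C_coeff_zero_mul_prod {K : Type*} [Field K] {f : K[X]} (hf : f.Splits)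
    (h0 : (0 : K) ∉ f.roots) :
    f.reverse = C (f.coeff 0) * (f.roots.map fun c => X - C c⁻¹).prod := by
  have hcoeff : f.coeff 0 = f.leadingCoeff * (f.roots.map Neg.neg).prod := by
    rw [hf.coeff_zero_eq_leadingCoeff_mul_prod_roots, Multiset.prod_map_neg,
      hf.natDegree_eq_card_roots]
    ring
  have hrev : (f.roots.map fun c => (X - C c).reverse) =
      f.roots.map fun c => C (-c) * (X - C c⁻¹) :=
    Multiset.map_congr rfl fun c hc => reverse_X_sub_C_of_ne_zero (ne_of_mem_of_not_mem hc h0)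
  conv_lhs => rw [hf.eq_prod_roots]
  rw [reverse_mul_of_domain, reverse_C, reverse_multiset_prod, Multiset.map_map, Function.comp_def,
    hrev, Multiset.prod_map_mul, hcoeff, C_mul, map_multiset_prod, Multiset.map_map, mul_assoc]
  rfl

theorem Splits.C_leadingCoeff_mul_reverse_map_conj {K : Type*} [RCLike K] {p : K[X]}
    (hs : p.Splits) (h : ∀ z ∈ p.roots, ‖z‖ = 1) :
    C p.leadingCoeff * (p.map (starRingEnd K)).reverse = C (starRingEnd K (p.coeff 0)) * p := by
  have hroots : (p.map (starRingEnd K)).roots = p.roots.map (starRingEnd K) :=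
    hs.roots_map _
  have h0 : (0 : K) ∉ (p.map (starRingEnd K)).roots := by
    rw [hroots, Multiset.mem_map]
    rintro ⟨z, hz, hz0⟩
    simpa [(map_eq_zero _).1 hz0] using h z hz
  have hinv : (p.roots.map (starRingEnd K)).map (fun c => X - C c⁻¹) = p.roots.map (X - C ·) := by
    rw [Multiset.map_map]
    refine Multiset.map_congr rfl fun z hz => ?_
    rw [Function.comp_apply, ← RCLike.inv_eq_conj (h z hz), inv_inv]
  rw [(hs.map _).reverse_eq_C_coeff_zero_mul_prod h0, hroots, hinv, coeff_map]
  conv_rhs => arg 2; rw [hs.eq_prod_roots]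
  ring

end Polynomial

theorem stmt_0_general (n : ℕ) (p : Polynomial ℂ) (hdeg : p.natDegree = n)
    (hroots : ∀ z : ℂ, p.eval z = 0 → ‖z‖ = 1) :
    ∀ k : ℕ, k ≤ n - 1 →
      p.coeff k * (starRingEnd ℂ) (p.coeff 0) =
        p.coeff n * (starRingEnd ℂ) (p.coeff (n - k)) := by
  intro k hk
  have key := congrArg (coeff · k) <| (IsAlgClosed.splits p).C_leadingCoeff_mul_reverse_map_conj
    fun z hz => hroots z (mem_roots'.1 hz).2
  simp only [coeff_C_mul, coeff_reverse, natDegree_map, hdeg, revAt_le (show k ≤ n by omega),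
    coeff_map, leadingCoeff] at key
  rw [mul_comm, ← key]

/-- If a complex polynomial `p = ∑ aₖ zᵏ` of degree `n ≥ 1` has all its
zeros on the unit circle, then `aₖ · conj(a₀) = aₙ · conj(a_{n-k})` for `0 ≤ k ≤ n-1`. -/
theorem stmt_0 (n : ℕ) (hn : 1 ≤ n) (p : Polynomial ℂ) (hdeg : p.natDegree = n)
    (hroots : ∀ z : ℂ, p.eval z = 0 → ‖z‖ = 1) :
    ∀ k : ℕ, k ≤ n - 1 →
      p.coeff k * (starRingEnd ℂ) (p.coeff 0) =
        p.coeff n * (starRingEnd ℂ) (p.coeff (n - k)) :=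
  stmt_0_general n p hdeg hroots
end

section
/- Let q be a monic complex polynomial of degree n ≥ 2 and let α be a zero of q. If R > 0 is such that |w - α| = R for every zero w of the derivative q', then (n-k-1)! · n · R^{2k} · q^{(k+1)}(α) = k! · q'(α) · conj(q^{(n-k)}(α)) for every k with 0 ≤ k ≤ n-1. -/
open Polynomial Complex

/-!
Write `q'(α + X) = n ∏ (X - w)`, the product over the zeros of `q'` shifted by `-α`. Since
`w · conj w = R²`, each factor satisfies `(-w) (X - conj w) = R² - w X`, so
`(∏ -w) · ∏ (X - conj w) = ∏ (R² - w X)`, the reversal of `∏ (X - w)` rescaled by `R²`.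
Comparing coefficients relates the `k`-th and the `(n-1-k)`-th Taylor coefficients of `q'` at
`α`, which are `q^{(k+1)}(α) / k!` and `q^{(n-k)}(α) / (n-1-k)!`.
-/

namespace Polynomial

section CommRing

variable {R : Type*} [CommRing R]

theorem natDegree_multiset_prod_X_sub_C_le (s : Multiset R) :
    (s.map (X - C ·)).prod.natDegree ≤ Multiset.card s :=
  (natDegree_multiset_prod_le _).trans <| by
    simpa [Multiset.map_map, Function.comp_def] using
      Nat.mul_le_mul_left (Multiset.card s) (natDegree_X_le (R := R))

theorem reflect_comp_C_mul_X_multiset_prod_X_sub_C (s : Multiset R) (r : R) :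
    reflect (Multiset.card s) ((s.map (X - C ·)).prod.comp (C r * X)) =
      (s.map fun w => C r - C w * X).prod := by
  induction s using Multiset.induction_on with
  | empty => simp [reflect_one]
  | cons a s ih =>
    have hprod : ((s.map (X - C ·)).prod.comp (C r * X)).natDegree ≤ Multiset.card s := by
      have : (C r * X).natDegree ≤ 1 := by compute_degree
      simpa using natDegree_comp_le.trans
        (Nat.mul_le_mul (natDegree_multiset_prod_X_sub_C_le s) this)
    have hfactor : ((X - C a).comp (C r * X)).natDegree ≤ 1 := by
      simp only [sub_comp, X_comp, C_comp]
      compute_degree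
    rw [Multiset.map_cons, Multiset.prod_cons, mul_comp, Multiset.card_cons, add_comm,
      reflect_mul _ _ hfactor hprod, ih, Multiset.map_cons, Multiset.prod_cons]
    simp [reflect_sub]

theorem coeff_multiset_prod_C_sub_C_mul_X (s : Multiset R) (r : R) {i j : ℕ}
    (hij : i + j = Multiset.card s) :
    (s.map fun w => C r - C w * X).prod.coeff j = r ^ i * (s.map (X - C ·)).prod.coeff i := by
  rw [← reflect_comp_C_mul_X_multiset_prod_X_sub_C, coeff_reflect, revAt_le (by omega),
    comp_C_mul_X_coeff, show Multiset.card s - j = i by omega, mul_comm]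

theorem C_coeff_zero_mul_multiset_prod_X_sub_C {s : Multiset R} {f : R → R} {r : R}
    (hf : ∀ w ∈ s, w * f w = r) :
    C ((s.map (X - C ·)).prod.coeff 0) * (s.map fun w => X - C (f w)).prod =
      (s.map fun w => C r - C w * X).prod := by
  rw [coeff_zero_multiset_prod, Multiset.map_map, map_multiset_prod, Multiset.map_map,
    ← Multiset.prod_map_mul]
  refine congrArg _ (Multiset.map_congr rfl fun w hw => ?_)
  simp only [Function.comp_apply, coeff_sub, coeff_X_zero, coeff_C_zero, zero_sub, map_neg,
    ← hf w hw, map_mul]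
  ring

end CommRing

theorem coeff_zero_mul_star_coeff_multiset_prod_X_sub_C {R : Type*} [CommRing R] [StarRing R]
    {s : Multiset R} {r : R} (hs : ∀ w ∈ s, w * star w = r) {i j : ℕ}
    (hij : i + j = Multiset.card s) :
    (s.map (X - C ·)).prod.coeff 0 * star ((s.map (X - C ·)).prod.coeff j) =
      r ^ i * (s.map (X - C ·)).prod.coeff i := by
  have hstar : star ((s.map (X - C ·)).prod.coeff j) =
      (s.map fun w => X - C (star w)).prod.coeff j := by
    rw [← starRingEnd_apply, ← coeff_map, Polynomial.map_multiset_prod, Multiset.map_map]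
    simp [starRingEnd_apply]
  rw [hstar, ← coeff_C_mul, C_coeff_zero_mul_multiset_prod_X_sub_C hs,
    coeff_multiset_prod_C_sub_C_mul_X s r hij]

theorem iterate_derivative_eval_eq_factorial_mul_coeff_taylor {R : Type*} [CommSemiring R]
    (p : R[X]) (a : R) (k : ℕ) :
    (derivative^[k] p).eval a = k.factorial * (taylor a p).coeff k := by
  rw [taylor_coeff, ← factorial_smul_hasseDeriv, LinearMap.smul_apply, nsmul_eq_mul, eval_mul,
    eval_natCast]

end Polynomial

theorem stmt_1_general (n : ℕ) (hn : 2 ≤ n) (q : Polynomial ℂ) (hq : q.Monic)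
    (hdeg : q.natDegree = n) (α : ℂ) (R : ℝ)
    (hw : ∀ w : ℂ, (Polynomial.derivative q).eval w = 0 → ‖w - α‖ = R) :
    ∀ k : ℕ, k ≤ n - 1 →
      ((Nat.factorial (n - k - 1) : ℂ)) * (n : ℂ) * (R : ℂ) ^ (2 * k) *
          (Polynomial.derivative^[k + 1] q).eval α =
        ((Nat.factorial k : ℂ)) * (Polynomial.derivative q).eval α *
          (starRingEnd ℂ) ((Polynomial.derivative^[n - k] q).eval α) := by
  intro k hk
  set P := taylor α (derivative q)
  have hsplits : P.Splits := IsAlgClosed.splits P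
  set F := (P.roots.map (X - C ·)).prod
  have hcoeff (j : ℕ) : P.coeff j = n * F.coeff j := by
    conv_lhs => rw [hsplits.eq_prod_roots]
    simp [P, F, hq.leadingCoeff, hdeg]
  have hcard : Multiset.card P.roots = n - 1 := by
    simp [splits_iff_card_roots.mp hsplits, P, hdeg]
  have hroots : ∀ w ∈ P.roots, w * star w = (R : ℂ) ^ 2 := by
    intro w hwP
    have := hw (w + α) (by simpa [P, taylor_eval] using (mem_roots'.mp hwP).2)
    rw [add_sub_cancel_right] at this
    rw [RCLike.star_def, mul_conj, ← Complex.sq_norm, this, ofReal_pow]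
  have hderiv (j : ℕ) : (derivative^[j + 1] q).eval α = j.factorial * P.coeff j := by
    rw [Function.iterate_succ_apply, iterate_derivative_eval_eq_factorial_mul_coeff_taylor]
  have hreciprocal : F.coeff 0 * star (F.coeff (n - 1 - k)) = ((R : ℂ) ^ 2) ^ k * F.coeff k :=
    coeff_zero_mul_star_coeff_multiset_prod_X_sub_C hroots (by rw [hcard]; omega)
  rw [show n - k - 1 = n - 1 - k by omega, show n - k = (n - 1 - k) + 1 by omega, hderiv, hderiv,
    ← taylor_coeff_zero, hcoeff, hcoeff, hcoeff, starRingEnd_apply, star_mul', star_mul',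
    star_natCast, star_natCast, pow_mul]
  linear_combination (-(k.factorial * (n - 1 - k).factorial * n * n) : ℂ) * hreciprocal

/-- If `q` is monic of degree `n ≥ 2`, `α` is a zero of `q`, and every zero `w`
of `q'` satisfies `|w - α| = R` (with `R > 0`), then
`(n-k-1)! · n · R^{2k} · q^{(k+1)}(α) = k! · q'(α) · conj(q^{(n-k)}(α))` for `0 ≤ k ≤ n-1`. -/
theorem stmt_1 (n : ℕ) (hn : 2 ≤ n) (q : Polynomial ℂ) (hq : q.Monic)
    (hdeg : q.natDegree = n) (α : ℂ) (hα : q.eval α = 0) (R : ℝ) (hR : 0 < R)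
    (hw : ∀ w : ℂ, (Polynomial.derivative q).eval w = 0 → ‖w - α‖ = R) :
    ∀ k : ℕ, k ≤ n - 1 →
      ((Nat.factorial (n - k - 1) : ℂ)) * (n : ℂ) * (R : ℂ) ^ (2 * k) *
          (Polynomial.derivative^[k + 1] q).eval α =
        ((Nat.factorial k : ℂ)) * (Polynomial.derivative q).eval α *
          (starRingEnd ℂ) ((Polynomial.derivative^[n - k] q).eval α) :=
  stmt_1_general n hn q hq hdeg α R hw
end

section
/- For every integer n greater than two, the set {x ∈ [1, n-2] : n^{2x/(n-1)} · (n - x) - n · (x + 1) = 0} equals the singleton {(n-1)/2}. -/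
/-!
Taking logarithms, the equation says `logRatio n x = 0`. The function `logRatio N` vanishes at
`0` and, being odd about `(N - 1) / 2`, also at `(N - 1) / 2`. On `[0, (N - 1) / 2]` it is strictly
convex, because its derivative is a constant minus `(N + 1) / ((N - x) (x + 1))` and the product
`(N - x) (x + 1)` increases up to the midpoint. Hence it is negative strictly between its two zeros,
and by the reflection positive on `((N - 1) / 2, N - 1)`, so the midpoint is its only zero there.
-/

open Real Set

/-- The logarithm of `N ^ (2x / (N - 1)) * (N - x) / (N * (x + 1))`. -/
noncomputable def logRatio (N x : ℝ) : ℝ :=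
  2 * x / (N - 1) * log N + log (N - x) - log N - log (x + 1)

theorem rpow_mul_sub_mul_eq_zero_iff {N x : ℝ} (hN : 0 < N) (hx₁ : -1 < x) (hxN : x < N) :
    N ^ (2 * x / (N - 1)) * (N - x) - N * (x + 1) = 0 ↔ logRatio N x = 0 := by
  have hlhs : 0 < N ^ (2 * x / (N - 1)) * (N - x) := mul_pos (rpow_pos_of_pos hN _) (by linarith)
  have hrhs : 0 < N * (x + 1) := mul_pos hN (by linarith)
  rw [sub_eq_zero, ← log_injOn_pos.eq_iff hlhs hrhs, log_mul (by positivity) (by linarith),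
    log_rpow hN, log_mul hN.ne' (by linarith), logRatio]
  constructor <;> intro h <;> linarith

theorem logRatio_zero (N : ℝ) : logRatio N 0 = 0 := by
  simp [logRatio]

theorem logRatio_reflect {N : ℝ} (hN : N ≠ 1) (x : ℝ) :
    logRatio N (N - 1 - x) = -logRatio N x := by
  have hN' : N - 1 ≠ 0 := sub_ne_zero.mpr hN
  simp only [logRatio, show N - (N - 1 - x) = x + 1 by ring, show N - 1 - x + 1 = N - x by ring]
  field_simp
  ring

theorem logRatio_half {N : ℝ} (hN : N ≠ 1) : logRatio N ((N - 1) / 2) = 0 := by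
  have h := logRatio_reflect hN ((N - 1) / 2)
  rw [show N - 1 - (N - 1) / 2 = (N - 1) / 2 by ring] at h
  linarith

theorem hasDerivAt_logRatio {N x : ℝ} (hxN : N - x ≠ 0) (hx₁ : x + 1 ≠ 0) :
    HasDerivAt (logRatio N)
      (2 / (N - 1) * log N - (N + 1) / ((N - x) * (x + 1))) x := by
  have hlin : HasDerivAt (fun x : ℝ => 2 * x / (N - 1) * log N) (2 / (N - 1) * log N) x := by
    simpa using (((hasDerivAt_id x).const_mul 2).div_const (N - 1)).mul_const (log N)
  have hleft : HasDerivAt (fun x : ℝ => log (N - x)) (-1 / (N - x)) x := by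
    simpa using ((hasDerivAt_id x).const_sub N).log hxN
  have hright : HasDerivAt (fun x : ℝ => log (x + 1)) (1 / (x + 1)) x :=
    ((hasDerivAt_id x).add_const 1).log hx₁
  refine (((hlin.add hleft).sub_const (log N)).sub hright).congr_deriv ?_
  field_simp
  ring

theorem strictConvexOn_logRatio {N : ℝ} (hN : 1 < N) :
    StrictConvexOn ℝ (Icc 0 ((N - 1) / 2)) (logRatio N) := by
  refine StrictMonoOn.strictConvexOn_of_deriv (convex_Icc _ _) ?_ ?_
  · intro x ⟨hx₀, hx⟩
    exact (hasDerivAt_logRatio (by linarith) (by linarith)).continuousAt.continuousWithinAt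
  · rw [interior_Icc]
    intro x ⟨hx₀, hx⟩ y ⟨hy₀, hy⟩ hxy
    rw [(hasDerivAt_logRatio (by linarith) (by linarith)).deriv,
      (hasDerivAt_logRatio (by linarith) (by linarith)).deriv]
    have hprod : (N - x) * (x + 1) < (N - y) * (y + 1) := by nlinarith
    have : (N + 1) / ((N - y) * (y + 1)) < (N + 1) / ((N - x) * (x + 1)) :=
      div_lt_div_of_pos_left (by linarith) (by nlinarith) hprod
    linarith

theorem logRatio_neg {N x : ℝ} (hN : 1 < N) (hx₀ : 0 < x) (hx : x < (N - 1) / 2) :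
    logRatio N x < 0 := by
  have h := (strictConvexOn_logRatio hN).lt_on_openSegment
    (left_mem_Icc.mpr (by linarith)) (right_mem_Icc.mpr (by linarith)) (by linarith)
    (by rw [openSegment_eq_Ioo (by linarith)]; exact ⟨hx₀, hx⟩)
  rwa [logRatio_zero, logRatio_half hN.ne', max_self] at h

theorem logRatio_eq_zero_iff {N x : ℝ} (hN : 1 < N) (hx₀ : 0 < x) (hx : x < N - 1) :
    logRatio N x = 0 ↔ x = (N - 1) / 2 := by
  refine ⟨fun h => ?_, fun h => h ▸ logRatio_half hN.ne'⟩
  rcases lt_trichotomy x ((N - 1) / 2) with hlt | heq | hgt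
  · exact absurd h (logRatio_neg hN hx₀ hlt).ne
  · exact heq
  · have := logRatio_neg hN (x := N - 1 - x) (by linarith) (by linarith)
    rw [logRatio_reflect hN.ne', h] at this
    linarith

/-- For every integer `n > 2`, the set
`{x ∈ [1, n-2] : n^{2x/(n-1)} (n - x) - n (x + 1) = 0}` equals `{(n-1)/2}`. -/
theorem stmt_2 (n : ℕ) (hn : 2 < n) :
    {x : ℝ | x ∈ Set.Icc (1 : ℝ) ((n : ℝ) - 2) ∧
        (n : ℝ) ^ (2 * x / ((n : ℝ) - 1)) * ((n : ℝ) - x) - (n : ℝ) * (x + 1) = 0} =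
      {((n : ℝ) - 1) / 2} := by
  have hN : (3 : ℝ) ≤ n := by exact_mod_cast hn
  ext x
  simp only [mem_ofPred_eq, mem_Icc, mem_singleton_iff]
  constructor
  · rintro ⟨⟨hx₁, hx⟩, heq⟩
    rwa [rpow_mul_sub_mul_eq_zero_iff (by linarith) (by linarith) (by linarith),
      logRatio_eq_zero_iff (by linarith) (by linarith) (by linarith)] at heq
  · rintro rfl
    refine ⟨⟨by linarith, by linarith⟩, ?_⟩
    rw [rpow_mul_sub_mul_eq_zero_iff (by linarith) (by linarith) (by linarith)]
    exact logRatio_half (by linarith)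
end

section
/- If n ≥ 2 and p ∈ S(n,0), then |p|_0 ≤ (1/n)^{1/(n-1)}. -/
open Polynomial Complex

/-- The distance `|p|_α` from `α` to the zero set of `p'`. -/
noncomputable def critDist (p : Polynomial ℂ) (α : ℂ) : ℝ :=
  sInf {r : ℝ | ∃ w : ℂ, (Polynomial.derivative p).eval w = 0 ∧ r = dist α w}

/-- `S_n`: monic complex polynomials of degree `n` with all zeros in the closed unit disk. -/
def Sset (n : ℕ) : Set (Polynomial ℂ) :=
  {p | p.Monic ∧ p.natDegree = n ∧ ∀ z : ℂ, p.eval z = 0 → ‖z‖ ≤ 1}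

/-! Write `p = X q`. Then `p'(0) = q(0)`, whose modulus is the product of the moduli of the roots
of `q`, hence at most `1`. On the other hand `p'` has leading coefficient `n` and `n - 1` roots, so
`|p'(0)| = n ∏ |w|` over the critical points `w`, which is at least `n m ^ (n - 1)` for the
smallest modulus `m` of a critical point. Hence `m ^ (n - 1) ≤ 1 / n`. -/

namespace Polynomial

variable {K : Type*} [NormedField K] {p : K[X]}

theorem Splits.nnnorm_coeff_zero (hp : p.Splits) :
    ‖p.coeff 0‖₊ = ‖p.leadingCoeff‖₊ * (p.roots.map (‖·‖₊)).prod := by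
  rw [hp.coeff_zero_eq_leadingCoeff_mul_prod_roots, nnnorm_mul, nnnorm_mul, nnnorm_pow,
    nnnorm_neg, nnnorm_one, one_pow, one_mul]
  exact congrArg _ (map_multiset_prod (nnnormHom : K →*₀ NNReal) _)

theorem Splits.norm_coeff_zero_le_one (hp : p.Splits) (hm : p.Monic)
    (h : ∀ z, p.IsRoot z → ‖z‖ ≤ 1) : ‖p.coeff 0‖ ≤ 1 := by
  rw [← coe_nnnorm, NNReal.coe_le_one, hp.nnnorm_coeff_zero, hm.leadingCoeff, nnnorm_one, one_mul]
  refine (Multiset.prod_le_pow_card _ 1 fun x hx => ?_).trans_eq (one_pow _)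
  obtain ⟨z, hz, rfl⟩ := Multiset.mem_map.1 hx
  exact h z (isRoot_of_mem_roots hz)

theorem Splits.exists_root_norm_pow_le (hp : p.Splits) (hd : p.natDegree ≠ 0) :
    ∃ w, p.IsRoot w ∧ ‖p.leadingCoeff‖ * ‖w‖ ^ p.natDegree ≤ ‖p.coeff 0‖ := by
  classical
  have hne : p.roots.toFinset.Nonempty := by
    rw [Multiset.toFinset_nonempty, ← Multiset.card_pos, ← hp.natDegree_eq_card_roots]
    exact Nat.pos_of_ne_zero hd
  obtain ⟨w, hw, hmin⟩ := p.roots.toFinset.exists_min_image (‖·‖₊) hne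
  rw [Multiset.mem_toFinset] at hw
  refine ⟨w, isRoot_of_mem_roots hw, ?_⟩
  rw [← coe_nnnorm, ← coe_nnnorm, ← coe_nnnorm, ← NNReal.coe_pow, ← NNReal.coe_mul,
    NNReal.coe_le_coe, hp.nnnorm_coeff_zero, hp.natDegree_eq_card_roots,
    ← Multiset.card_map (‖·‖₊)]
  gcongr
  refine Multiset.pow_card_le_prod fun x hx => ?_
  obtain ⟨z, hz, rfl⟩ := Multiset.mem_map.1 hx
  exact hmin z (Multiset.mem_toFinset.2 hz)

theorem Splits.norm_coeff_zero_derivative_le_one (hs : p.Splits) (hm : p.Monic)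
    (h0 : p.coeff 0 = 0) (h : ∀ z, p.IsRoot z → ‖z‖ ≤ 1) :
    ‖p.derivative.coeff 0‖ ≤ 1 := by
  obtain ⟨q, rfl⟩ : X ∣ p := X_dvd_iff.mpr h0
  have hq : q.Monic := monic_X.of_mul_monic_left hm
  have hqs : q.Splits := hs.of_dvd hm.ne_zero (dvd_mul_left q X)
  rw [coeff_derivative, Nat.cast_zero, zero_add, zero_add, mul_one, coeff_X_mul]
  exact hqs.norm_coeff_zero_le_one hq fun z hz => h z (by simp [hz.eq_zero])

end Polynomial

theorem Real.le_rpow_inv_of_pow_le {x y : ℝ} {k : ℕ} (hx : 0 ≤ x) (hk : k ≠ 0)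
    (h : x ^ k ≤ y) : x ≤ y ^ (k⁻¹ : ℝ) := by
  rw [le_rpow_inv_iff_of_pos hx ((pow_nonneg hx k).trans h) (by positivity), rpow_natCast]
  exact h

theorem critDist_le_dist {p : ℂ[X]} {α w : ℂ} (hw : p.derivative.IsRoot w) :
    critDist p α ≤ dist α w :=
  csInf_le ⟨0, by rintro _ ⟨w, -, rfl⟩; exact dist_nonneg⟩ ⟨w, hw, rfl⟩

/-- If `n ≥ 2` and `p ∈ S(n,0)` then `|p|₀ ≤ (1/n)^{1/(n-1)}`. -/
theorem stmt_3 (n : ℕ) (hn : 2 ≤ n) (p : Polynomial ℂ) (hp : p ∈ Sset n)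
    (h0 : p.eval 0 = 0) :
    critDist p 0 ≤ ((1 : ℝ) / n) ^ ((1 : ℝ) / ((n : ℝ) - 1)) := by
  obtain ⟨hmon, hdeg, hroots⟩ := hp
  have hdeg' : p.derivative.natDegree = n - 1 := by rw [natDegree_derivative, hdeg]
  obtain ⟨w, hw, hwle⟩ :=
    (IsAlgClosed.splits p.derivative).exists_root_norm_pow_le (by omega)
  have hcoeff : ‖p.derivative.coeff 0‖ ≤ 1 :=
    (IsAlgClosed.splits p).norm_coeff_zero_derivative_le_one hmon
      (by rwa [coeff_zero_eq_eval_zero]) hroots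
  rw [leadingCoeff_derivative, hmon.leadingCoeff, one_mul, hdeg, hdeg', norm_natCast] at hwle
  have hpow : ‖w‖ ^ (n - 1) ≤ 1 / n := by
    rw [le_div_iff₀ (by positivity), mul_comm]
    exact hwle.trans hcoeff
  have hcast : ((n - 1 : ℕ) : ℝ) = n - 1 := by rw [Nat.cast_sub (by omega), Nat.cast_one]
  calc critDist p 0 ≤ ‖w‖ := (critDist_le_dist hw).trans_eq (dist_zero_left w)
    _ ≤ _ := by
      rw [one_div ((n : ℝ) - 1), ← hcast]
      exact Real.le_rpow_inv_of_pow_le (norm_nonneg w) (by omega) hpow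
end

section
/- Let n = 2m+1 with m ≥ 1 and let p ∈ S(n,0). Then |p|_0 = (1/n)^{1/(n-1)} if and only if p(z) = z^{2m+1} + λ e^{iθ} z^{m+1} + e^{2iθ} z for some λ, θ ∈ ℝ with |λ| ≤ 2√(2m+1)/(m+1). Consequently the 0-maximal polynomials of odd degree n = 2m+1 are exactly these polynomials. -/
/-!
Write `p = X * s`. Since `p'(0) = s(0)`, comparing constant terms in `p' = n ∏ (X - wᵢ)` and
`s = ∏ (X - zⱼ)` gives `n ∏ |wᵢ| = ∏ |zⱼ| ≤ 1`, so some critical point has `|wᵢ| ≤ ρ`, where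
`ρ ^ (n - 1) = 1 / n`. If `|p|₀ = ρ`, all inequalities are equalities: `|wᵢ| = ρ` and `|zⱼ| = 1`.
The coefficients of a polynomial whose zeros all lie on the circle `|z| = r` satisfy
`r^(2k) c̄_d c_k = c₀ c̄_(d-k)`. Applied to `s` and to `p' = ∑ (k+1) s_k X^k`, this gives
`(n ρ^(2k) (k+1) - (n-k)) s_k = 0`, and concavity of `log (n ρ^(2x) (x+1) / (n-x))` on `[0, m]`
together with its antisymmetry about `x = m` shows that the bracket vanishes only for
`k = 0, m, 2m`. Hence `p = X^n + A X^(m+1) + B X` with `|B| = 1` and `A = B Ā`, i.e.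
`A = λ e^(iθ)`, `B = e^(2iθ)` with `λ` real. Writing `v = w^m e^(-iθ)`, the equation `p'(w) = 0`
becomes the real quadratic `n v² + (m+1) λ v + 1 = 0`, whose roots satisfy `|v|² = 1/n`,
i.e. `|w| = ρ`, exactly when its discriminant is nonpositive.
-/

open Polynomial Complex

open ComplexConjugate

theorem Multiset.map_eq_of_prod_map_le {R ι : Type*} [CommSemiring R] [LinearOrder R]
    [IsStrictOrderedRing R] {s : Multiset ι} {f g : ι → R}
    (hf : ∀ i ∈ s, 0 ≤ f i) (hfg : ∀ i ∈ s, f i ≤ g i)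
    (hprod : (s.map g).prod ≤ (s.map f).prod) (hne : (s.map f).prod ≠ 0) :
    ∀ i ∈ s, f i = g i := by
  by_contra! ⟨i, hi, hne_i⟩
  obtain ⟨t, rfl⟩ := Multiset.exists_cons_of_mem hi
  simp only [Multiset.map_cons, Multiset.prod_cons] at hprod hne
  have hft : ∀ j ∈ t, 0 ≤ f j := fun j hj => hf j (Multiset.mem_cons_of_mem hj)
  have hpos : 0 < (t.map f).prod :=
    (Multiset.prod_map_nonneg hft).lt_of_ne' (right_ne_zero_of_mul hne)
  have hlt : f i < g i := (hfg i hi).lt_of_ne hne_i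
  refine hprod.not_gt ?_
  calc f i * (t.map f).prod < g i * (t.map f).prod := mul_lt_mul_of_pos_right hlt hpos
    _ ≤ g i * (t.map g).prod := by
      gcongr
      · exact (hf i hi).trans hlt.le
      · exact Multiset.prod_map_le_prod_map₀ f g hft
          fun j hj => hfg j (Multiset.mem_cons_of_mem hj)

namespace Polynomial

theorem norm_eval_zero_eq (f : ℂ[X]) :
    ‖f.eval 0‖ = ‖f.leadingCoeff‖ * (f.roots.map (‖·‖)).prod := by
  rw [(IsAlgClosed.splits f).eval_eq_prod_roots, norm_mul]
  congr 1
  rw [← normHom_apply, map_multiset_prod, Multiset.map_map]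
  simp

theorem comp_C_mul_X_eq_of_forall_norm_root_eq {f : ℂ[X]} {r : ℝ}
    (hf : ∀ w ∈ f.roots, ‖w‖ = r) :
    C (conj f.leadingCoeff) * f.comp (C ((r : ℂ) ^ 2) * X) =
      C (f.coeff 0) * (f.map (starRingEnd ℂ)).reverse := by
  suffices key : ∀ s : Multiset ℂ, (∀ w ∈ s, ‖w‖ = r) →
      (s.map (X - C ·)).prod.comp (C ((r : ℂ) ^ 2) * X) =
        C ((s.map (X - C ·)).prod.coeff 0) *
          ((s.map (X - C ·)).prod.map (starRingEnd ℂ)).reverse by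
    have hfP := (IsAlgClosed.splits f).eq_prod_roots
    set P := (f.roots.map (X - C ·)).prod
    rw [hfP, mul_comp, C_comp, key _ hf, coeff_C_mul, Polynomial.map_mul, map_C,
      reverse_mul_of_domain, reverse_C, ← hfP, C_mul]
    ring
  intro s hs
  induction s using Multiset.induction_on with
  | empty => simp [reverse]
  | cons w s ih =>
    -- `r² / conj w = w`, so `X - C w` rescaled by `r²` is `-w` times the reversal of its conjugate
    have hw : w * conj w = (r : ℂ) ^ 2 := by
      rw [mul_conj, normSq_eq_norm_sq, hs w (Multiset.mem_cons_self w s)]; push_cast; rfl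
    simp only [Multiset.map_cons, Multiset.prod_cons, mul_comp, mul_coeff_zero, Polynomial.map_mul,
      reverse_mul_of_domain, ih fun v hv => hs v (Multiset.mem_cons_of_mem hv)]
    have hrev : (X - C (conj w)).reverse = 1 - C (conj w) * X := by
      have hX : (X : ℂ[X]).reverse = 1 := by
        rw [← mul_one X, reverse_X_mul, ← C_1, reverse_C]
      rw [sub_eq_add_neg, ← C_neg, reverse_add_C, hX, natDegree_X, pow_one, C_neg, neg_mul,
        ← sub_eq_add_neg]
    rw [sub_comp, X_comp, C_comp, Polynomial.map_sub, map_X, map_C, hrev, ← hw, C_mul]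
    simp only [coeff_sub, coeff_X_zero, coeff_C_zero, zero_sub, C_neg, C_mul]
    ring

theorem conj_leadingCoeff_mul_coeff_eq_of_forall_norm_root_eq {f : ℂ[X]} {r : ℝ}
    (hf : ∀ w ∈ f.roots, ‖w‖ = r) {k : ℕ} (hk : k ≤ f.natDegree) :
    conj f.leadingCoeff * ((r : ℂ) ^ 2) ^ k * f.coeff k =
      f.coeff 0 * conj (f.coeff (f.natDegree - k)) := by
  have := congrArg (coeff · k) (comp_C_mul_X_eq_of_forall_norm_root_eq hf)
  simp only [coeff_C_mul, comp_C_mul_X_coeff, coeff_reverse, natDegree_map, revAt_le hk,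
    coeff_map] at this
  rw [← this]
  ring

theorem Monic.coeff_eq_coeff_zero_mul_conj {s : ℂ[X]} (hsm : s.Monic)
    (hz : ∀ z ∈ s.roots, ‖z‖ = 1) {k : ℕ} (hk : k ≤ s.natDegree) :
    s.coeff k = s.coeff 0 * conj (s.coeff (s.natDegree - k)) := by
  simpa [hsm.leadingCoeff] using conj_leadingCoeff_mul_coeff_eq_of_forall_norm_root_eq hz hk

theorem eq_X_pow_add_C_mul_X_pow_add_C {R : Type*} [Semiring R] {s : R[X]} {m : ℕ}
    (hm : 0 < m) (hsm : s.Monic) (hsd : s.natDegree = 2 * m)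
    (hcoeff : ∀ i, 0 < i → i < 2 * m → i ≠ m → s.coeff i = 0) :
    s = X ^ (2 * m) + C (s.coeff m) * X ^ m + C (s.coeff 0) := by
  have htop : s.coeff (2 * m) = 1 := hsd ▸ hsm.coeff_natDegree
  have hhigh : ∀ i, 2 * m < i → s.coeff i = 0 :=
    fun i hi => coeff_eq_zero_of_natDegree_lt (hsd ▸ hi)
  ext i
  simp only [coeff_add, coeff_C_mul, coeff_X_pow, coeff_C]
  split_ifs <;> grind

theorem exists_eval_derivative_eq_zero {p : ℂ[X]} (hp : 2 ≤ p.natDegree) :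
    ∃ w, p.derivative.eval w = 0 :=
  IsAlgClosed.exists_root _ <| by
    rw [degree_eq_natDegree (derivative_ne_zero.mpr (by omega)), natDegree_derivative]
    exact_mod_cast (by omega : p.natDegree - 1 ≠ 0)

end Polynomial

theorem Complex.normSq_eq_inv_iff_sq_le {N c : ℝ} {v : ℂ} (hN : 0 < N)
    (hv : (N : ℂ) * v ^ 2 + c * v + 1 = 0) : normSq v = N⁻¹ ↔ c ^ 2 ≤ 4 * N := by
  have hre := congrArg re hv
  have him := congrArg im hv
  simp only [add_re, add_im, mul_re, mul_im, ofReal_re, ofReal_im, pow_two, one_re, one_im,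
    zero_re, zero_im] at hre him
  rw [normSq_apply, ← one_div, eq_div_iff hN.ne']
  have him' : v.im * (2 * N * v.re + c) = 0 := by linear_combination him
  rcases mul_eq_zero.mp him' with hy | hx
  · rw [hy] at hre ⊢
    constructor
    · intro h
      have hcx : c * v.re + 2 = 0 := by linear_combination hre - h
      exact le_of_eq (by linear_combination (-c ^ 2) * h + N * (c * v.re - 2) * hcx)
    · intro h; nlinarith [sq_nonneg (2 * N * v.re + c)]
  · have hc : c = -(2 * N * v.re) := by linear_combination hx
    subst hc
    constructor
    · intro h
      have : 4 * N - (-(2 * N * v.re)) ^ 2 = 4 * N ^ 2 * v.im ^ 2 := by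
        linear_combination (-4 * N) * h
      nlinarith [sq_nonneg (N * v.im)]
    · intro _; nlinarith

theorem Complex.exists_eq_ofReal_mul_exp_of_norm_eq_one {A B : ℂ} (hB : ‖B‖ = 1)
    (hA : A = B * conj A) : ∃ lam θ : ℝ, A = lam * exp (θ * I) ∧ B = exp (2 * θ * I) := by
  set θ := B.arg / 2
  set u := exp (θ * I)
  have hBu : exp (2 * θ * I) = B := by
    have := norm_mul_exp_arg_mul_I B
    rw [hB, ofReal_one, one_mul] at this
    rw [← this]; congr 1; push_cast [θ]; ring
  have hu : u * conj u = 1 := by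
    rw [mul_conj, normSq_eq_norm_sq, norm_exp_ofReal_mul_I]; simp
  have hu2 : B = u ^ 2 := by rw [← hBu, sq, ← exp_add]; ring_nf
  have hreal : conj (A * conj u) = A * conj u := by
    rw [map_mul, conj_conj]
    linear_combination -(conj u * hA + conj u * conj A * hu2 + conj A * u * hu)
  refine ⟨(A * conj u).re, θ, ?_, hBu.symm⟩
  rw [conj_eq_iff_re.mp hreal]
  linear_combination (-A) * hu

/-- `M` times the logarithm of `n (ρ²)^x (x + 1) / (n - x)`, where `n = 2M + 1` and
`ρ ^ (2M) = 1 / n`. -/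
noncomputable def logGap (M x : ℝ) : ℝ :=
  M * Real.log (x + 1) + (M - x) * Real.log (2 * M + 1) - M * Real.log (2 * M + 1 - x)

section logGap

variable {M x : ℝ}

theorem hasDerivAt_logGap (hx : -1 < x) (hx' : x < 2 * M + 1) :
    HasDerivAt (logGap M) (M / (x + 1) - Real.log (2 * M + 1) + M / (2 * M + 1 - x)) x := by
  have h1 : HasDerivAt (fun y => Real.log (y + 1)) (1 / (x + 1)) x :=
    ((hasDerivAt_id' x).add_const 1).log (by linarith) |>.congr_deriv (by simp)
  have h2 : HasDerivAt (fun y => Real.log (2 * M + 1 - y)) (-1 / (2 * M + 1 - x)) x :=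
    ((hasDerivAt_id' x).const_sub _).log (by linarith) |>.congr_deriv (by simp)
  have h3 : HasDerivAt (fun y => (M - y) * Real.log (2 * M + 1)) (-Real.log (2 * M + 1)) x :=
    ((hasDerivAt_id' x).const_sub M).mul_const _ |>.congr_deriv (by simp)
  exact (((h1.const_mul M).add h3).sub (h2.const_mul M)).congr_deriv (by ring)

theorem strictConcaveOn_logGap (hM : 0 < M) : StrictConcaveOn ℝ (Set.Icc 0 M) (logGap M) := by
  have hderiv : ∀ x ∈ Set.Icc 0 M,
      HasDerivAt (logGap M) (M / (x + 1) - Real.log (2 * M + 1) + M / (2 * M + 1 - x)) x :=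
    fun x hx => hasDerivAt_logGap (by linarith [hx.1]) (by linarith [hx.2])
  refine StrictAntiOn.strictConcaveOn_of_deriv (convex_Icc 0 M)
    (fun x hx => (hderiv x hx).continuousAt.continuousWithinAt) ?_
  rw [interior_Icc]
  intro x hx y hy hxy
  rw [(hderiv x (Set.Ioo_subset_Icc_self hx)).deriv,
    (hderiv y (Set.Ioo_subset_Icc_self hy)).deriv]
  obtain ⟨hx0, -⟩ := hx
  obtain ⟨-, hyM⟩ := hy
  have h1 : 0 < x + 1 := by linarith
  have h2 : 0 < 2 * M + 1 - x := by linarith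
  have h3 : 0 < y + 1 := by linarith
  have h4 : 0 < 2 * M + 1 - y := by linarith
  -- `1 / (t + 1) + 1 / (2M + 1 - t) = (2M + 2) / ((t + 1) (2M + 1 - t))`, and the denominator
  -- increases on `[0, M]`
  have key : M / (y + 1) + M / (2 * M + 1 - y) < M / (x + 1) + M / (2 * M + 1 - x) := by
    rw [div_add_div _ _ h3.ne' h4.ne', div_add_div _ _ h1.ne' h2.ne',
      div_lt_div_iff₀ (by positivity) (by positivity)]
    nlinarith [mul_pos hM (sub_pos.mpr hxy),
      mul_pos (mul_pos hM (sub_pos.mpr hxy)) (by linarith : (0 : ℝ) < 2 * M - x - y)]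
  linarith

theorem logGap_zero : logGap M 0 = 0 := by simp [logGap]

theorem logGap_self : logGap M M = 0 := by
  simp only [logGap, sub_self, zero_mul, add_zero]
  ring_nf

theorem logGap_two_mul_sub : logGap M (2 * M - x) = -logGap M x := by
  simp only [logGap]
  ring_nf

theorem logGap_pos (hx : 0 < x) (hxM : x < M) : 0 < logGap M x := by
  have hM := hx.trans hxM
  have h := (strictConcaveOn_logGap hM).lt_on_openSegment (Set.left_mem_Icc.mpr hM.le)
    (Set.right_mem_Icc.mpr hM.le) hM.ne (by rw [openSegment_eq_Ioo hM]; exact ⟨hx, hxM⟩)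
  rwa [logGap_zero, logGap_self, min_self] at h

theorem logGap_ne_zero (hx : 0 < x) (hx' : x < 2 * M) (hxM : x ≠ M) : logGap M x ≠ 0 := by
  rcases hxM.lt_or_gt with hlt | hgt
  · exact (logGap_pos hx hlt).ne'
  · have := logGap_pos (M := M) (x := 2 * M - x) (by linarith) (by linarith)
    rw [logGap_two_mul_sub] at this
    linarith

end logGap

noncomputable def maxCritDist (n : ℕ) : ℝ := ((1 : ℝ) / n) ^ ((1 : ℝ) / ((n : ℝ) - 1))

section maxCritDist

variable {m : ℕ}

theorem maxCritDist_pos {n : ℕ} (hn : n ≠ 0) : 0 < maxCritDist n :=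
  Real.rpow_pos_of_pos (by positivity) _

theorem maxCritDist_pow (hm : 0 < m) :
    maxCritDist (2 * m + 1) ^ (2 * m) = (2 * m + 1 : ℝ)⁻¹ := by
  have h2m : ((2 * m + 1 : ℕ) : ℝ) - 1 = (2 * m : ℕ) := by push_cast; ring
  rw [maxCritDist, h2m, ← Real.rpow_natCast, ← Real.rpow_mul (by positivity),
    one_div_mul_cancel (by positivity), Real.rpow_one]
  push_cast
  rw [one_div]

theorem norm_eq_maxCritDist_iff (hm : 0 < m) {w : ℂ} :
    ‖w‖ = maxCritDist (2 * m + 1) ↔ ‖w‖ ^ (2 * m) = (2 * m + 1 : ℝ)⁻¹ := by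
  rw [← maxCritDist_pow hm, pow_left_inj₀ (norm_nonneg w) (maxCritDist_pos (by omega)).le
    (by omega)]

theorem mul_maxCritDist_sq_pow_ne {i : ℕ} (hm : 0 < m) (hi0 : 0 < i) (hi : i < 2 * m)
    (him : i ≠ m) :
    (2 * m + 1 : ℝ) * (maxCritDist (2 * m + 1) ^ 2) ^ i * (i + 1) ≠ 2 * m + 1 - i := by
  intro h
  have hρ := maxCritDist_pos (n := 2 * m + 1) (by omega)
  have hlogρ : m * Real.log (maxCritDist (2 * m + 1) ^ 2) = -Real.log (2 * m + 1) := by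
    rw [← Real.log_rpow (by positivity), ← Real.log_inv, ← maxCritDist_pow hm, Real.rpow_natCast,
      ← pow_mul, mul_comm 2 m]
  have hlog := congrArg Real.log h
  rw [Real.log_mul (by positivity) (by positivity), Real.log_mul (by positivity) (by positivity),
    Real.log_pow] at hlog
  refine logGap_ne_zero (M := m) (x := i) (by exact_mod_cast hi0) (by exact_mod_cast hi)
    (by exact_mod_cast him) ?_
  unfold logGap
  linear_combination m * hlog - (i : ℝ) * hlogρ

end maxCritDist

section critDist

variable {p : ℂ[X]}

theorem critDist_zero_le_norm {w : ℂ} (hw : p.derivative.eval w = 0) : critDist p 0 ≤ ‖w‖ :=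
  csInf_le ⟨0, by rintro r ⟨v, -, rfl⟩; exact dist_nonneg⟩ ⟨w, hw, (dist_zero_left w).symm⟩

theorem critDist_zero_eq_of_forall {c : ℝ} (hex : ∃ w, p.derivative.eval w = 0)
    (h : ∀ w, p.derivative.eval w = 0 → ‖w‖ = c) : critDist p 0 = c := by
  obtain ⟨w₀, hw₀⟩ := hex
  have : {r : ℝ | ∃ w : ℂ, p.derivative.eval w = 0 ∧ r = dist 0 w} = {c} := by
    ext r
    constructor
    · rintro ⟨w, hw, rfl⟩
      rw [dist_zero_left, h w hw, Set.mem_singleton_iff]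
    · rintro rfl
      exact ⟨w₀, hw₀, by rw [dist_zero_left, h w₀ hw₀]⟩
  rw [critDist, this, csInf_singleton]

end critDist

section form

variable {m : ℕ}

theorem eval_derivative_form (lam θ : ℝ) (w : ℂ) :
    (X ^ (2 * m + 1) + C ((lam : ℂ) * exp (θ * I)) * X ^ (m + 1) +
        C (exp (2 * θ * I)) * X).derivative.eval w =
      exp (2 * θ * I) * (((2 * m + 1 : ℝ) : ℂ) * (w ^ m * exp (-(θ * I))) ^ 2 +
        (((m + 1) * lam : ℝ) : ℂ) * (w ^ m * exp (-(θ * I))) + 1) := by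
  have h2 : exp (2 * θ * I) = exp (θ * I) ^ 2 := by rw [sq, ← exp_add]; ring_nf
  rw [h2, exp_neg]
  have hu : exp (θ * I) ≠ 0 := exp_ne_zero _
  simp only [derivative_add, derivative_X_pow, derivative_C_mul_X_pow, derivative_C_mul_X,
    eval_add, eval_mul, eval_C, eval_pow, eval_X]
  push_cast
  field_simp
  ring

theorem norm_eq_maxCritDist_iff_of_eval_derivative_form (hm : 0 < m) {lam θ : ℝ} {w : ℂ}
    (hw : (X ^ (2 * m + 1) + C ((lam : ℂ) * exp (θ * I)) * X ^ (m + 1) +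
        C (exp (2 * θ * I)) * X).derivative.eval w = 0) :
    ‖w‖ = maxCritDist (2 * m + 1) ↔ ((m + 1) * lam) ^ 2 ≤ 4 * (2 * m + 1) := by
  rw [eval_derivative_form, mul_eq_zero, or_iff_right (exp_ne_zero _)] at hw
  have hv : ‖w ^ m * exp (-(θ * I))‖ ^ 2 = ‖w‖ ^ (2 * m) := by
    rw [norm_mul, ← neg_mul, ← ofReal_neg, norm_exp_ofReal_mul_I, mul_one, norm_pow, ← pow_mul,
      mul_comm]
  rw [norm_eq_maxCritDist_iff hm, ← hv, ← normSq_eq_norm_sq,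
    normSq_eq_inv_iff_sq_le (by positivity) hw]

theorem abs_le_two_mul_sqrt_div_iff {lam : ℝ} :
    |lam| ≤ 2 * √(2 * m + 1) / (m + 1) ↔ ((m + 1) * lam) ^ 2 ≤ 4 * (2 * m + 1) := by
  rw [le_div_iff₀ (by positivity), ← sq_le_sq₀ (by positivity) (by positivity), mul_pow, mul_pow,
    sq_abs, Real.sq_sqrt (by positivity), mul_comm, mul_pow]
  norm_num

end form

namespace Sset

variable {m : ℕ} {p s : ℂ[X]}

theorem monic_natDegree_of_eq_X_mul (hp : p ∈ Sset (2 * m + 1)) (hs : p = X * s) :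
    s.Monic ∧ s.natDegree = 2 * m := by
  have hsm : s.Monic := monic_X.of_mul_monic_left (hs ▸ hp.1)
  refine ⟨hsm, ?_⟩
  have := hp.2.1
  rw [hs, natDegree_mul X_ne_zero hsm.ne_zero, natDegree_X] at this
  omega

theorem norm_le_one_of_mem_roots (hp : p ∈ Sset (2 * m + 1)) (hs : p = X * s) {z : ℂ}
    (hz : z ∈ s.roots) : ‖z‖ ≤ 1 :=
  hp.2.2 z (by rw [hs, eval_mul, (mem_roots'.mp hz).2, mul_zero])

theorem natDegree_derivative (hp : p ∈ Sset (2 * m + 1)) : p.derivative.natDegree = 2 * m := by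
  simp [hp.2.1]

theorem card_roots_derivative (hp : p ∈ Sset (2 * m + 1)) : p.derivative.roots.card = 2 * m := by
  rw [← (IsAlgClosed.splits _).natDegree_eq_card_roots, natDegree_derivative hp]

theorem leadingCoeff_derivative (hp : p ∈ Sset (2 * m + 1)) :
    p.derivative.leadingCoeff = (2 * m + 1 : ℕ) := by
  simp [hp.1.leadingCoeff, hp.2.1]

theorem coeff_derivative_of_eq_X_mul (hs : p = X * s) (i : ℕ) :
    p.derivative.coeff i = (i + 1) * s.coeff i := by
  rw [coeff_derivative, hs, coeff_X_mul, mul_comm]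

theorem mul_prod_norm_roots_derivative (hp : p ∈ Sset (2 * m + 1)) (hs : p = X * s) :
    (2 * m + 1 : ℝ) * (p.derivative.roots.map (‖·‖)).prod = (s.roots.map (‖·‖)).prod := by
  have h : ‖p.derivative.eval 0‖ = ‖s.eval 0‖ := by simp [hs, derivative_mul]
  rwa [norm_eval_zero_eq, norm_eval_zero_eq, leadingCoeff_derivative hp,
    (monic_natDegree_of_eq_X_mul hp hs).1.leadingCoeff, Complex.norm_natCast, norm_one, one_mul,
    Nat.cast_add_one, Nat.cast_mul, Nat.cast_two] at h

theorem prod_norm_roots_le_one (hp : p ∈ Sset (2 * m + 1)) (hs : p = X * s) :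
    (s.roots.map (‖·‖)).prod ≤ 1 := by
  simpa using Multiset.prod_map_le_prod_map₀ _ (fun _ => (1 : ℝ)) (fun z _ => norm_nonneg z)
    fun z hz => norm_le_one_of_mem_roots hp hs hz

theorem critDist_le_maxCritDist (hm : 0 < m) (hp : p ∈ Sset (2 * m + 1))
    (h0 : p.eval 0 = 0) : critDist p 0 ≤ maxCritDist (2 * m + 1) := by
  obtain ⟨s, hs⟩ : X ∣ p := X_dvd_iff.mpr (by rwa [coeff_zero_eq_eval_zero])
  by_contra! hlt
  have hprod : maxCritDist (2 * m + 1) ^ (2 * m) < (p.derivative.roots.map (‖·‖)).prod := by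
    simpa [card_roots_derivative hp] using Multiset.prod_map_lt_prod_map
      ((IsAlgClosed.splits _).roots_ne_zero (by rw [natDegree_derivative hp]; omega))
      (fun _ => maxCritDist (2 * m + 1)) (‖·‖) (fun _ _ => maxCritDist_pos (by omega))
      fun w hw => hlt.trans_le (critDist_zero_le_norm (mem_roots'.mp hw).2)
  rw [maxCritDist_pow hm, inv_lt_iff_one_lt_mul₀ (by positivity)] at hprod
  have := mul_prod_norm_roots_derivative hp hs
  have := prod_norm_roots_le_one hp hs
  linarith

theorem norm_roots_of_critDist_eq (hm : 0 < m) (hp : p ∈ Sset (2 * m + 1)) (hs : p = X * s)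
    (hcd : critDist p 0 = maxCritDist (2 * m + 1)) :
    (∀ w ∈ p.derivative.roots, ‖w‖ = maxCritDist (2 * m + 1)) ∧ ∀ z ∈ s.roots, ‖z‖ = 1 := by
  set ρ := maxCritDist (2 * m + 1)
  have hρ : 0 < ρ := maxCritDist_pos (by omega)
  have hconst : (p.derivative.roots.map fun _ => ρ).prod = (2 * m + 1 : ℝ)⁻¹ := by
    simp [card_roots_derivative hp, ρ, maxCritDist_pow hm]
  have hge : ∀ w ∈ p.derivative.roots, ρ ≤ ‖w‖ :=
    fun w hw => hcd ▸ critDist_zero_le_norm (mem_roots'.mp hw).2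
  have hlow := Multiset.prod_map_le_prod_map₀ _ _ (fun _ _ => hρ.le) hge
  have heq := mul_prod_norm_roots_derivative hp hs
  have hle := prod_norm_roots_le_one hp hs
  have hn : (0 : ℝ) < 2 * m + 1 := by positivity
  rw [hconst, inv_le_iff_one_le_mul₀ hn] at hlow
  constructor
  · intro w hw
    refine (Multiset.map_eq_of_prod_map_le (fun _ _ => hρ.le) hge ?_ ?_ w hw).symm
    · rw [hconst, ← one_div, le_div_iff₀ hn]
      linarith
    · rw [hconst]; positivity
  · intro z hz
    refine Multiset.map_eq_of_prod_map_le (g := fun _ => 1) (fun z _ => norm_nonneg z)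
      (fun z hz => norm_le_one_of_mem_roots hp hs hz) ?_ ?_ z hz
    · simp only [Multiset.map_const', Multiset.prod_replicate, one_pow]
      linarith
    · linarith

theorem coeff_eq_zero_of_norm_roots (hm : 0 < m) (hp : p ∈ Sset (2 * m + 1))
    (hs : p = X * s) (hw : ∀ w ∈ p.derivative.roots, ‖w‖ = maxCritDist (2 * m + 1))
    (hz : ∀ z ∈ s.roots, ‖z‖ = 1) {i : ℕ} (hi0 : 0 < i) (hi : i < 2 * m) (him : i ≠ m) :
    s.coeff i = 0 := by
  obtain ⟨hsm, hsd⟩ := monic_natDegree_of_eq_X_mul hp hs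
  have hS := hsm.coeff_eq_coeff_zero_mul_conj hz (k := i) (by omega)
  have hD := conj_leadingCoeff_mul_coeff_eq_of_forall_norm_root_eq hw (k := i)
    (by rw [natDegree_derivative hp]; omega)
  rw [hsd] at hS
  rw [leadingCoeff_derivative hp, natDegree_derivative hp, coeff_derivative_of_eq_X_mul hs,
    coeff_derivative_of_eq_X_mul hs, coeff_derivative_of_eq_X_mul hs] at hD
  have hfac : (((2 * m + 1 : ℝ) * (maxCritDist (2 * m + 1) ^ 2) ^ i * (i + 1) -
      (2 * m + 1 - i) : ℝ) : ℂ) * s.coeff i = 0 := by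
    simp only [map_mul, map_natCast, map_add, map_one] at hD
    push_cast [Nat.cast_sub hi.le] at hD ⊢
    linear_combination hD - (2 * m + 1 - i : ℂ) * hS
  refine (mul_eq_zero.mp hfac).resolve_left ?_
  exact_mod_cast sub_ne_zero.mpr (mul_maxCritDist_sq_pow_ne hm hi0 hi him)

theorem exists_eq_of_critDist_eq (hm : 0 < m) (hp : p ∈ Sset (2 * m + 1))
    (h0 : p.eval 0 = 0) (hcd : critDist p 0 = maxCritDist (2 * m + 1)) :
    (∀ w, p.derivative.eval w = 0 → ‖w‖ = maxCritDist (2 * m + 1)) ∧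
      ∃ A B : ℂ, p = X ^ (2 * m + 1) + C A * X ^ (m + 1) + C B * X ∧ ‖B‖ = 1 ∧
        A = B * conj A := by
  obtain ⟨s, hs⟩ : X ∣ p := X_dvd_iff.mpr (by rwa [coeff_zero_eq_eval_zero])
  obtain ⟨hw, hz⟩ := norm_roots_of_critDist_eq hm hp hs hcd
  obtain ⟨hsm, hsd⟩ := monic_natDegree_of_eq_X_mul hp hs
  have hsform := eq_X_pow_add_C_mul_X_pow_add_C hm hsm hsd
    fun i => coeff_eq_zero_of_norm_roots hm hp hs hw hz
  have hrel := fun k (hk : k ≤ 2 * m) => hsd ▸ hsm.coeff_eq_coeff_zero_mul_conj hz (hsd ▸ hk)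
  refine ⟨fun w hw0 => hw w (mem_roots'.mpr ⟨?_, hw0⟩), s.coeff m, s.coeff 0, ?_, ?_, ?_⟩
  · rw [Ne, derivative_eq_zero, hp.2.1]; omega
  · rw [hs]; nth_rw 1 [hsform]; ring
  · have h1 := hrel (2 * m) le_rfl
    rw [← hsd, hsm.coeff_natDegree, Nat.sub_self, mul_conj, normSq_eq_norm_sq] at h1
    exact (pow_eq_one_iff_of_nonneg (norm_nonneg _) two_ne_zero).mp (by exact_mod_cast h1.symm)
  · simpa [(by omega : 2 * m - m = m)] using hrel m (by omega)

theorem critDist_eq_maxCritDist_iff (hm : 0 < m) (hp : p ∈ Sset (2 * m + 1))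
    (h0 : p.eval 0 = 0) :
    critDist p 0 = maxCritDist (2 * m + 1) ↔
      ∃ lam θ : ℝ, |lam| ≤ 2 * √(2 * m + 1) / (m + 1) ∧
        p = X ^ (2 * m + 1) + C ((lam : ℂ) * exp (θ * I)) * X ^ (m + 1) +
          C (exp (2 * θ * I)) * X := by
  obtain ⟨w, hw⟩ := exists_eval_derivative_eq_zero (p := p) (by rw [hp.2.1]; omega)
  constructor
  · intro hcd
    obtain ⟨hcrit, A, B, hpAB, hB, hA⟩ := exists_eq_of_critDist_eq hm hp h0 hcd
    obtain ⟨lam, θ, rfl, rfl⟩ := exists_eq_ofReal_mul_exp_of_norm_eq_one hB hA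
    refine ⟨lam, θ, ?_, hpAB⟩
    rw [abs_le_two_mul_sqrt_div_iff,
      ← norm_eq_maxCritDist_iff_of_eval_derivative_form hm (hpAB ▸ hw)]
    exact hcrit w hw
  · rintro ⟨lam, θ, hlam, rfl⟩
    exact critDist_zero_eq_of_forall ⟨w, hw⟩ fun v hv =>
      (norm_eq_maxCritDist_iff_of_eval_derivative_form hm hv).mpr
        (abs_le_two_mul_sqrt_div_iff.mp hlam)

theorem X_pow_add_X_mem (hm : 0 < m) : (X ^ (2 * m + 1) + X : ℂ[X]) ∈ Sset (2 * m + 1) := by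
  refine ⟨by monicity!; exact hm.ne', by compute_degree!; simp [hm.ne'], fun z hz => ?_⟩
  have : z * (z ^ (2 * m) + 1) = 0 := by
    simp only [eval_add, eval_pow, eval_X] at hz
    linear_combination hz
  rcases mul_eq_zero.mp this with rfl | h
  · simp
  · have : ‖z‖ ^ (2 * m) = 1 := by
      rw [← norm_pow, eq_neg_of_add_eq_zero_left h, norm_neg, norm_one]
    exact ((pow_eq_one_iff_of_nonneg (norm_nonneg z) (by omega)).mp this).le

end Sset

/-- For `n = 2m+1`, `m ≥ 1`, and `p ∈ S(n,0)`: `|p|₀ = (1/n)^{1/(n-1)}` iff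
`p(z) = z^{2m+1} + λ e^{iθ} z^{m+1} + e^{2iθ} z` for some real `λ, θ` with
`|λ| ≤ 2√(2m+1)/(m+1)`; consequently the `0`-maximal polynomials of odd degree `n = 2m+1`
are exactly these polynomials. -/
theorem stmt_5 (m : ℕ) (hm : 1 ≤ m) (n : ℕ) (hn : n = 2 * m + 1)
    (p : Polynomial ℂ) (hp : p ∈ Sset n) (h0 : p.eval 0 = 0) :
    (critDist p 0 = ((1 : ℝ) / n) ^ ((1 : ℝ) / ((n : ℝ) - 1)) ↔
      ∃ (lam θ : ℝ), |lam| ≤ 2 * Real.sqrt (2 * m + 1) / (m + 1) ∧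
        p = X ^ (2 * m + 1) + C ((lam : ℂ) * Complex.exp (θ * Complex.I)) * X ^ (m + 1) +
          C (Complex.exp (2 * θ * Complex.I)) * X) ∧
    ((∀ q ∈ Sset n, q.eval 0 = 0 → critDist q 0 ≤ critDist p 0) ↔
      ∃ (lam θ : ℝ), |lam| ≤ 2 * Real.sqrt (2 * m + 1) / (m + 1) ∧
        p = X ^ (2 * m + 1) + C ((lam : ℂ) * Complex.exp (θ * Complex.I)) * X ^ (m + 1) +
          C (Complex.exp (2 * θ * Complex.I)) * X) := by
  subst hn
  have hiff := Sset.critDist_eq_maxCritDist_iff hm hp h0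
  have hq₀ : critDist (X ^ (2 * m + 1) + X) 0 = maxCritDist (2 * m + 1) :=
    (Sset.critDist_eq_maxCritDist_iff hm (Sset.X_pow_add_X_mem hm) (by simp)).mpr
      ⟨0, 0, by rw [abs_zero]; positivity, by simp⟩
  refine ⟨hiff, fun hmax => hiff.mp ?_, fun hform q hq hq0 => ?_⟩
  · exact (Sset.critDist_le_maxCritDist hm hp h0).antisymm
      (hq₀ ▸ hmax _ (Sset.X_pow_add_X_mem hm) (by simp))
  · exact hiff.mpr hform ▸ Sset.critDist_le_maxCritDist hm hq hq0
end

section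
/- Let n ≥ 2, a ∈ ℂ, R > 0, and let p be a complex polynomial of degree n with p(a) = 0 such that every zero w of p' satisfies |w - a| ≥ R. Then max_{z : p(z) = 0} |z - a| ≥ R · n^{1/(n-1)}. Moreover, the constant R · n^{1/(n-1)} is attained, e.g. by p(z) = (z-a)^n + n R^{n-1} (z-a). -/
/-!
Write `p = (X - a) q`, so that `p'(a) = q(a)`. Factoring over the roots, `|p'(a)|` is
`n |lc p|` times the product of the distances from `a` to the `n - 1` critical points, hence at
least `n |lc p| R^(n-1)`, while `|q(a)|` is `|lc p|` times the product of the distances from `a` to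
the other `n - 1` roots, hence at most `|lc p| ρ^(n-1)` with `ρ` the largest of them. Thus
`ρ^(n-1) ≥ n R^(n-1)`. For `(z-a)^n + c (z-a)` with `c = n R^(n-1)` the critical points satisfy
`|w - a|^(n-1) = R^(n-1)` and the nonzero roots `|z - a|^(n-1) = n R^(n-1)`.
-/

open Polynomial Complex

section NormedField
variable {K : Type*} [NormedField K] [IsAlgClosed K]

theorem Polynomial.norm_eval_eq_norm_leadingCoeff_mul_prod_roots (p : K[X]) (a : K) :
    ‖p.eval a‖ = ‖p.leadingCoeff‖ * (p.roots.map (‖a - ·‖)).prod := by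
  rw [(IsAlgClosed.splits p).eval_eq_prod_roots a, norm_mul]
  exact congrArg _
    ((map_multiset_prod (normHom : K →*₀ ℝ) _).trans (by rw [Multiset.map_map]; rfl))

theorem Polynomial.norm_leadingCoeff_mul_pow_le_norm_eval {p : K[X]} {a : K} {r : ℝ}
    (hr : 0 ≤ r) (h : ∀ z ∈ p.roots, r ≤ ‖z - a‖) :
    ‖p.leadingCoeff‖ * r ^ p.natDegree ≤ ‖p.eval a‖ := by
  have hprod : (p.roots.map fun _ => r).prod ≤ (p.roots.map (‖a - ·‖)).prod :=
    Multiset.prod_map_le_prod_map₀ _ _ (fun _ _ => hr) fun z hz => norm_sub_rev z a ▸ h z hz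
  rw [Multiset.map_const', Multiset.prod_replicate, IsAlgClosed.card_roots_eq_natDegree] at hprod
  rw [p.norm_eval_eq_norm_leadingCoeff_mul_prod_roots]
  gcongr

theorem Polynomial.exists_mem_roots_norm_eval_le {p : K[X]} (hp : p.natDegree ≠ 0) (a : K) :
    ∃ z ∈ p.roots, ‖p.eval a‖ ≤ ‖p.leadingCoeff‖ * ‖z - a‖ ^ p.natDegree := by
  have hne : (p.roots.map (‖a - ·‖)).toFinset.Nonempty := by
    simpa [← Multiset.card_pos, IsAlgClosed.card_roots_eq_natDegree, Nat.pos_iff_ne_zero]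
  obtain ⟨_, hmem, hmax⟩ := (p.roots.map (‖a - ·‖)).toFinset.exists_max_image id hne
  obtain ⟨z, hz, rfl⟩ := Multiset.mem_map.1 (Multiset.mem_toFinset.1 hmem)
  have hprod : (p.roots.map (‖a - ·‖)).prod ≤ (p.roots.map fun _ => ‖a - z‖).prod :=
    Multiset.prod_map_le_prod_map₀ _ _ (fun _ _ => norm_nonneg _)
      fun w hw => hmax _ (Multiset.mem_toFinset.2 (Multiset.mem_map_of_mem (‖a - ·‖) hw))
  rw [Multiset.map_const', Multiset.prod_replicate, IsAlgClosed.card_roots_eq_natDegree,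
    norm_sub_rev] at hprod
  refine ⟨z, hz, ?_⟩
  rw [p.norm_eval_eq_norm_leadingCoeff_mul_prod_roots]
  gcongr
end NormedField

theorem Polynomial.exists_isRoot_natDegree_mul_pow_le_norm_sub_pow {p : ℂ[X]} {a : ℂ} {r : ℝ}
    (hp : 1 < p.natDegree) (ha : p.IsRoot a) (hr : 0 ≤ r)
    (hcrit : ∀ w, p.derivative.IsRoot w → r ≤ ‖w - a‖) :
    ∃ z, p.IsRoot z ∧
      p.natDegree * r ^ (p.natDegree - 1) ≤ ‖z - a‖ ^ (p.natDegree - 1) := by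
  set q := p /ₘ (X - C a)
  have hpq : (X - C a) * q = p := mul_divByMonic_eq_iff_isRoot.2 ha
  have hdeg : q.natDegree = p.natDegree - 1 := by
    rw [natDegree_divByMonic p (monic_X_sub_C a), natDegree_X_sub_C]
  have hlc : q.leadingCoeff = p.leadingCoeff := by
    rw [← hpq, leadingCoeff_mul, leadingCoeff_X_sub_C, one_mul]
  have hlc0 : 0 < ‖p.leadingCoeff‖ := by
    simpa using ne_zero_of_natDegree_gt hp
  have heval : p.derivative.eval a = q.eval a := by
    rw [← hpq]; simp
  have hlow : ‖p.leadingCoeff‖ * (p.natDegree * r ^ (p.natDegree - 1)) ≤ ‖q.eval a‖ := by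
    have := norm_leadingCoeff_mul_pow_le_norm_eval (p := p.derivative) hr
      fun z hz => hcrit z (isRoot_of_mem_roots hz)
    rwa [leadingCoeff_derivative, natDegree_derivative, norm_mul, norm_natCast, heval,
      mul_assoc] at this
  obtain ⟨z, hz, hup⟩ := exists_mem_roots_norm_eval_le (p := q) (by omega) a
  rw [hlc, hdeg] at hup
  refine ⟨z, ?_, le_of_mul_le_mul_left (hlow.trans hup) hlc0⟩
  rw [← hpq, IsRoot, eval_mul, isRoot_of_mem_roots hz, mul_zero]

section Extremal
variable {a c : ℂ} {m : ℕ}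

theorem Polynomial.natDegree_X_sub_C_pow_add_C_mul_X_sub_C (hm : 1 < m) :
    ((X - C a) ^ m + C c * (X - C a)).natDegree = m := by
  rw [natDegree_add_eq_left_of_natDegree_lt, natDegree_pow, natDegree_X_sub_C, mul_one]
  calc (C c * (X - C a)).natDegree ≤ 1 :=
      (natDegree_C_mul_le _ _).trans (natDegree_X_sub_C a).le
    _ < _ := by rwa [natDegree_pow, natDegree_X_sub_C, mul_one]

theorem Polynomial.norm_sub_pow_le_of_isRoot (hm : m ≠ 0) {z : ℂ}
    (hz : ((X - C a) ^ (m + 1) + C c * (X - C a)).IsRoot z) : ‖z - a‖ ^ m ≤ ‖c‖ := by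
  have hfac : (z - a) * ((z - a) ^ m + c) = 0 := by
    rw [← hz.eq_zero]; simp only [eval_add, eval_mul, eval_pow, eval_sub, eval_X, eval_C]; ring
  rcases mul_eq_zero.1 hfac with h | h
  · simp [h, hm]
  · rw [← norm_pow, eq_neg_of_add_eq_zero_left h, norm_neg]

theorem Polynomial.norm_le_mul_norm_sub_pow_of_isRoot_derivative {w : ℂ}
    (hw : (derivative ((X - C a) ^ (m + 1) + C c * (X - C a))).IsRoot w) :
    ‖c‖ ≤ (m + 1) * ‖w - a‖ ^ m := by
  have h : c = -((m + 1) * (w - a) ^ m) := by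
    rw [← sub_eq_zero, ← hw.eq_zero]
    simp only [derivative_X_sub_C_pow, derivative_C_mul, derivative_sub, derivative_X,
      derivative_C, add_tsub_cancel_right, eval_add, eval_mul, eval_pow, eval_sub, eval_X, eval_C,
      sub_zero, mul_one, Nat.cast_succ, map_add, map_natCast, map_one, eval_natCast, eval_one]
    ring
  rw [h, norm_neg, norm_mul, norm_pow]
  norm_cast
end Extremal

theorem Real.mul_rpow_one_div_pow {x : ℝ} (hx : 0 ≤ x) (r : ℝ) {m : ℕ} (hm : m ≠ 0) :
    (r * x ^ (1 / (m : ℝ))) ^ m = x * r ^ m := by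
  rw [mul_pow, one_div, Real.rpow_inv_natCast_pow hx hm, mul_comm]

/-- If `p` has degree `n ≥ 2`, `p(a) = 0`, and every zero `w` of `p'` satisfies
`|w - a| ≥ R > 0`, then some zero `z` of `p` satisfies `|z - a| ≥ R·n^{1/(n-1)}`; moreover
the constant is attained by `p(z) = (z-a)^n + n R^{n-1}(z-a)`. -/
theorem stmt_8 (n : ℕ) (hn : 2 ≤ n) (a : ℂ) (R : ℝ) (hR : 0 < R) :
    (∀ p : Polynomial ℂ, p.natDegree = n → p.eval a = 0 →
      (∀ w : ℂ, (Polynomial.derivative p).eval w = 0 → R ≤ ‖w - a‖) →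
      ∃ z : ℂ, p.eval z = 0 ∧
        R * (n : ℝ) ^ ((1 : ℝ) / ((n : ℝ) - 1)) ≤ ‖z - a‖) ∧
    (∀ p : Polynomial ℂ,
      p = (X - C a) ^ n + C ((n : ℂ) * (R : ℂ) ^ (n - 1)) * (X - C a) →
      p.natDegree = n ∧ p.eval a = 0 ∧
      (∀ w : ℂ, (Polynomial.derivative p).eval w = 0 → R ≤ ‖w - a‖) ∧
      (∀ z : ℂ, p.eval z = 0 →
        ‖z - a‖ ≤ R * (n : ℝ) ^ ((1 : ℝ) / ((n : ℝ) - 1)))) := by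
  obtain ⟨m, rfl⟩ : ∃ m, n = m + 1 := ⟨n - 1, by omega⟩
  have hm : m ≠ 0 := by omega
  set s := R * ((m + 1 : ℕ) : ℝ) ^ ((1 : ℝ) / (((m + 1 : ℕ) : ℝ) - 1)) with hs_def
  have hs0 : 0 ≤ s := by positivity
  have hs : s ^ m = (m + 1) * R ^ m := by
    rw [hs_def, Nat.cast_succ, add_sub_cancel_right]
    exact Real.mul_rpow_one_div_pow (by positivity) R hm
  have hc : ‖((m + 1 : ℕ) : ℂ) * (R : ℂ) ^ m‖ = (m + 1) * R ^ m := by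
    rw [norm_mul, norm_pow, norm_natCast, norm_real, Real.norm_of_nonneg hR.le, Nat.cast_succ]
  simp only [Nat.add_sub_cancel]
  refine ⟨fun p hdeg ha hcrit => ?_, fun p hp => ?_⟩
  · obtain ⟨z, hz, hle⟩ :=
      exists_isRoot_natDegree_mul_pow_le_norm_sub_pow (by omega) ha hR.le hcrit
    rw [hdeg, Nat.add_sub_cancel, Nat.cast_succ, ← hs] at hle
    exact ⟨z, hz, (pow_le_pow_iff_left₀ hs0 (norm_nonneg _) hm).1 hle⟩
  · subst hp
    refine ⟨natDegree_X_sub_C_pow_add_C_mul_X_sub_C (by omega), by simp, fun w hw => ?_,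
      fun z hz => ?_⟩
    · have hle := hc ▸ norm_le_mul_norm_sub_pow_of_isRoot_derivative hw
      exact (pow_le_pow_iff_left₀ hR.le (norm_nonneg _) hm).1
        (le_of_mul_le_mul_left hle (by positivity))
    · exact (pow_le_pow_iff_left₀ (norm_nonneg _) hs0 hm).1
        (hs ▸ hc ▸ norm_sub_pow_le_of_isRoot hm hz)
end

section
/- Let M be a complex m×n matrix and let x range over vectors in ℂ^n. The system Re(Mx) > 0 (i.e., there exists x ∈ ℂ^n such that the real part of every coordinate of Mx is strictly positive) is solvable if and only if M is not positively singular. -/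
/-!
`Re (∑ⱼ mᵢⱼ xⱼ)` is the real inner product of `x ∈ ℂⁿ` with the conjugate of the `i`-th row, so
this is Gordan's alternative in the real Hilbert space `ℂⁿ`: some `x` has positive inner product
with every row iff `0` is not in the convex hull of the rows, and `0` lies in that hull iff `M` is
positively singular (normalise `μ` to sum `1`). If `0` is outside the compact hull, Hahn–Banach
separates them, and the Riesz representative of the separating functional is the required `x`.
-/

/-- A complex `m × n` matrix `M` is positively singular if there exist nonnegative reals
`μ₁, …, μ_m`, not all zero, with `∑ᵢ μᵢ mᵢⱼ = 0` for every `j`. -/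
def PositivelySingular {m n : ℕ} (M : Matrix (Fin m) (Fin n) ℂ) : Prop :=
  ∃ μ : Fin m → ℝ, (∀ i, 0 ≤ μ i) ∧ (∃ i, μ i ≠ 0) ∧
    ∀ j, ∑ i, (μ i : ℂ) * M i j = 0

open Set
open scoped InnerProductSpace

section ConvexHull

variable {𝕜 E ι : Type*} [Field 𝕜] [LinearOrder 𝕜] [IsStrictOrderedRing 𝕜]
  [AddCommGroup E] [Module 𝕜 E] [Fintype ι]

theorem convexHull_range_eq_image_stdSimplex (a : ι → E) :
    convexHull 𝕜 (range a) = Fintype.linearCombination 𝕜 a '' stdSimplex 𝕜 ι := by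
  classical
  rw [← convexHull_rangle_single_eq_stdSimplex, LinearMap.image_convexHull, ← range_comp]
  congr 1
  ext i
  simp [Fintype.linearCombination_apply_single]

theorem zero_mem_convexHull_range_iff (a : ι → E) :
    (0 : E) ∈ convexHull 𝕜 (range a) ↔
      ∃ μ : ι → 𝕜, (∀ i, 0 ≤ μ i) ∧ (∃ i, μ i ≠ 0) ∧ ∑ i, μ i • a i = 0 := by
  rw [convexHull_range_eq_image_stdSimplex]
  constructor
  · rintro ⟨μ, ⟨hμ₀, hμ₁⟩, hμa⟩
    obtain ⟨i, -, hi⟩ := Finset.exists_ne_zero_of_sum_ne_zero (hμ₁ ▸ one_ne_zero)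
    exact ⟨μ, hμ₀, ⟨i, hi⟩, by rwa [← Fintype.linearCombination_apply]⟩
  · rintro ⟨μ, hμ₀, ⟨i, hi⟩, hμa⟩
    have hsum : 0 < ∑ j, μ j :=
      Finset.sum_pos' (fun j _ ↦ hμ₀ j) ⟨i, Finset.mem_univ i, (hμ₀ i).lt_of_ne' hi⟩
    refine ⟨(∑ j, μ j)⁻¹ • μ, ⟨fun j ↦ ?_, ?_⟩, ?_⟩
    · exact smul_nonneg (inv_nonneg.2 hsum.le) (hμ₀ j)
    · simp [← Finset.mul_sum, hsum.ne']
    · rw [map_smul, Fintype.linearCombination_apply, hμa, smul_zero]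

end ConvexHull

theorem exists_forall_inner_pos_iff_zero_notMem_convexHull {E ι : Type*} [NormedAddCommGroup E]
    [InnerProductSpace ℝ E] [CompleteSpace E] [Finite ι] (a : ι → E) :
    (∃ x, ∀ i, 0 < ⟪x, a i⟫_ℝ) ↔ (0 : E) ∉ convexHull ℝ (range a) := by
  constructor
  · rintro ⟨x, hx⟩ h₀
    have : convexHull ℝ (range a) ⊆ {y | 0 < innerSL ℝ x y} :=
      convexHull_min (range_subset_iff.2 hx)
        (convex_halfSpace_gt (innerSL ℝ x).toLinearMap.isLinear 0)
    simpa using this h₀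
  · intro h₀
    obtain ⟨f, u, hf₀, hfa⟩ := geometric_hahn_banach_point_closed (convex_convexHull ℝ _)
      ((finite_range a).isClosed_convexHull ℝ) h₀
    refine ⟨(InnerProductSpace.toDual ℝ E).symm f, fun i ↦ ?_⟩
    rw [InnerProductSpace.toDual_symm_apply]
    exact (map_zero f ▸ hf₀).trans (hfa _ (subset_convexHull ℝ _ (mem_range_self i)))

/-- The system `Re(Mx) > 0` is solvable iff `M` is not positively singular. -/
theorem stmt_9 (m n : ℕ) (M : Matrix (Fin m) (Fin n) ℂ) :
    (∃ x : Fin n → ℂ, ∀ i, 0 < (∑ j, M i j * x j).re) ↔ ¬ PositivelySingular M := by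
  let a (i : Fin m) : EuclideanSpace ℂ (Fin n) := WithLp.toLp 2 (star (M i))
  have inner_a (x : EuclideanSpace ℂ (Fin n)) (i : Fin m) :
      ⟪x, a i⟫_ℝ = (∑ j, M i j * x j).re := by
    simp [a, PiLp.inner_apply, Complex.inner, Complex.re_sum]
  have sum_smul_a (μ : Fin m → ℝ) :
      ∑ i, μ i • a i = 0 ↔ ∀ j, ∑ i, (μ i : ℂ) * M i j = 0 := by
    rw [← WithLp.ofLp_eq_zero, funext_iff]
    refine forall_congr' fun j ↦ ?_
    rw [← map_eq_zero (starRingEnd ℂ)]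
    simp [a, WithLp.ofLp_sum, Finset.sum_apply, Complex.real_smul, map_sum]
  rw [PositivelySingular, (WithLp.equiv 2 (Fin n → ℂ)).symm.exists_congr_left]
  simp only [Equiv.symm_symm, WithLp.equiv_apply, ← inner_a,
    exists_forall_inner_pos_iff_zero_notMem_convexHull, zero_mem_convexHull_range_iff, sum_smul_a]
end

section
/- Let p be a complex polynomial of degree n ≥ 2 such that both p and its derivative p' have only simple zeros. Write the zeros of p as z_1,…,z_n and the zeros of p' as w_1,…,w_{n-1}, and define the (n-1)×(n-1) matrix B(p) with entries (z_i - w_j)^{-2} for 1 ≤ i, j ≤ n-1 (note z_i ≠ w_j since p has simple zeros). Then det(B(p)) ≠ 0. -/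
/-!
If `B` were singular, some `c ≠ 0` would satisfy `∑ i, c i / (z i - w j) ^ 2 = 0` for every `j`:
the derivative of `R = ∑ i, c i / (X - z i) = A / P`, with `P = ∏ i < n, (X - z i)`, vanishes at
every `w j`. As `p` is a multiple of `(X - z n) * P` and `p' (w j) = 0 ≠ p (w j)`, the identity
`W(p, (X - z n) * A) = (X - z n) ^ 2 * W(P, A)` for the Wronskian `W(P, A) = P ^ 2 * R'` shows that
the derivative of `(X - z n) * A`, a polynomial of degree `< n - 1`, has the `n - 1` roots `w j`.
So `(X - z n) * A` is a constant vanishing at `z n`, hence `A = 0`, and evaluating `A` at the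
nodes `z i` gives `c = 0`.
-/

open Polynomial Finset

namespace Polynomial

theorem wronskian_mul_mul {R : Type*} [CommRing R] (h a b : R[X]) :
    wronskian (h * a) (h * b) = h ^ 2 * wronskian a b := by
  simp only [wronskian, derivative_mul]
  ring

theorem wronskian_X_sub_C_mul_self {R : Type*} [CommRing R] (x : R) (q : R[X]) :
    wronskian ((X - C x) * q) q = -q ^ 2 := by
  simp only [wronskian, derivative_mul, derivative_X_sub_C]
  ring

theorem eq_C_leadingCoeff_mul_nodal {F ι : Type*} [Field F] [Fintype ι] {p : F[X]} {v : ι → F}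
    (hv : Function.Injective v) (hdeg : p.natDegree = Fintype.card ι)
    (hroots : ∀ i, p.eval (v i) = 0) :
    p = C p.leadingCoeff * Lagrange.nodal univ v := by
  rcases eq_or_ne p 0 with rfl | hp
  · simp
  have hlc : p.leadingCoeff ≠ 0 := leadingCoeff_ne_zero.2 hp
  refine eq_of_degree_le_of_eval_index_eq univ hv.injOn ?_ ?_ ?_ fun i _ => ?_
  · exact degree_le_of_natDegree_le hdeg.le
  · rw [degree_C_mul hlc, Lagrange.degree_nodal, degree_eq_natDegree hp, hdeg, card_univ]
  · rw [leadingCoeff_mul, leadingCoeff_C, Lagrange.nodal_monic.leadingCoeff, mul_one]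
  · rw [hroots, eval_mul, Lagrange.eval_nodal_at_node (mem_univ i), mul_zero]

end Polynomial

namespace Lagrange

variable {F ι : Type*} [Field F] [DecidableEq ι] {s : Finset ι} {v : ι → F}

/-- The numerator of `∑ i ∈ s, c i / (X - v i)` over the common denominator `nodal s v`. -/
noncomputable def partialFractionNumerator (s : Finset ι) (v c : ι → F) : F[X] :=
  ∑ i ∈ s, C (c i) * nodal (s.erase i) v

theorem natDegree_partialFractionNumerator_le (c : ι → F) :
    (partialFractionNumerator s v c).natDegree ≤ #s - 1 :=
  natDegree_sum_le_of_forall_le _ _ fun i hi => (natDegree_C_mul_le _ _).trans <| by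
    rw [natDegree_nodal, card_erase_of_mem hi]

theorem eval_partialFractionNumerator_at_node (c : ι → F) {i : ι} (hi : i ∈ s) :
    (partialFractionNumerator s v c).eval (v i) = c i * (nodal (s.erase i) v).eval (v i) := by
  rw [partialFractionNumerator, eval_finsetSum, sum_eq_single_of_mem i hi, eval_mul, eval_C]
  intro j _ hji
  rw [eval_mul, eval_nodal_at_node (mem_erase.2 ⟨hji.symm, hi⟩), mul_zero]

theorem eq_zero_of_partialFractionNumerator_eq_zero (hv : Set.InjOn v s) {c : ι → F}
    (h : partialFractionNumerator s v c = 0) {i : ι} (hi : i ∈ s) : c i = 0 := by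
  have hnode := eval_partialFractionNumerator_at_node c hi (v := v)
  rw [h, eval_zero, eq_comm] at hnode
  refine (mul_eq_zero.1 hnode).resolve_right (eval_nodal_not_at_node fun j hj => ?_)
  exact fun hij => (mem_erase.1 hj).1 (hv (mem_of_mem_erase hj) hi hij.symm)

theorem wronskian_nodal_partialFractionNumerator (c : ι → F) :
    wronskian (nodal s v) (partialFractionNumerator s v c) =
      -∑ i ∈ s, C (c i) * nodal (s.erase i) v ^ 2 := by
  rw [partialFractionNumerator, ← wronskianBilin_apply, map_sum, ← sum_neg_distrib]
  refine sum_congr rfl fun i hi => ?_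
  rw [← smul_eq_C_mul, map_smul, wronskianBilin_apply, nodal_eq_mul_nodal_erase hi,
    wronskian_X_sub_C_mul_self, smul_eq_C_mul, mul_neg]

theorem eval_wronskian_nodal_partialFractionNumerator (c : ι → F) {x : F}
    (hx : ∀ i ∈ s, x ≠ v i) :
    (wronskian (nodal s v) (partialFractionNumerator s v c)).eval x =
      -(nodal s v).eval x ^ 2 * ∑ i ∈ s, c i * ((v i - x) ^ 2)⁻¹ := by
  rw [wronskian_nodal_partialFractionNumerator, eval_neg, eval_finsetSum, neg_mul, mul_sum, neg_inj]
  refine sum_congr rfl fun i hi => ?_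
  have hxi : v i - x ≠ 0 := sub_ne_zero.2 (hx i hi).symm
  rw [nodal_eq_mul_nodal_erase hi]
  simp only [eval_mul, eval_pow, eval_C, eval_sub, eval_X]
  field_simp
  ring

variable [CharZero F] [Fintype ι]

theorem eq_zero_of_sum_mul_inv_sub_sq_eq_zero {ζ w : ι → F} (hζ : Function.Injective ζ)
    (hw : Function.Injective w) {a : F}
    (hcrit : ∀ j, (derivative ((X - C a) * nodal univ ζ)).eval (w j) = 0)
    (hreg : ∀ j, ((X - C a) * nodal univ ζ).eval (w j) ≠ 0)
    {c : ι → F} (hc : ∀ j, ∑ i, c i * ((ζ i - w j) ^ 2)⁻¹ = 0) : c = 0 := by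
  rcases isEmpty_or_nonempty ι with _ | _
  · exact Subsingleton.elim _ _
  set A := partialFractionNumerator univ ζ c
  have hnode : ∀ j, ∀ i ∈ univ, w j ≠ ζ i := fun j i _ hji =>
    hreg j (by rw [eval_mul, hji, eval_nodal_at_node (mem_univ i), mul_zero])
  have hA' : ∀ j, (derivative ((X - C a) * A)).eval (w j) = 0 := by
    intro j
    have hW : (wronskian ((X - C a) * nodal univ ζ) ((X - C a) * A)).eval (w j) = 0 := by
      rw [wronskian_mul_mul, eval_mul, eval_wronskian_nodal_partialFractionNumerator c (hnode j),
        hc j, mul_zero, mul_zero]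
    rw [wronskian, eval_sub, eval_mul (p := derivative _), hcrit j, zero_mul, sub_zero,
      eval_mul] at hW
    exact (mul_eq_zero.1 hW).resolve_left (hreg j)
  have hdeg : (derivative ((X - C a) * A)).natDegree < Fintype.card ι := by
    have hdegA : A.natDegree ≤ Fintype.card ι - 1 := natDegree_partialFractionNumerator_le c
    have hmul := natDegree_mul_le (p := X - C a) (q := A)
    have hder := natDegree_derivative_le ((X - C a) * A)
    rw [natDegree_X_sub_C] at hmul
    have := Fintype.card_pos (α := ι)
    omega
  have hA : A = 0 := by
    have hderiv := eq_zero_of_natDegree_lt_card_of_eval_eq_zero _ hw hA' hdeg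
    have hconst := eq_C_of_derivative_eq_zero hderiv
    have h0 : ((X - C a) * A).coeff 0 = 0 := by simpa using (congrArg (eval a) hconst).symm
    rw [h0, map_zero] at hconst
    exact (mul_eq_zero.1 hconst).resolve_left (X_sub_C_ne_zero a)
  exact funext fun i => eq_zero_of_partialFractionNumerator_eq_zero hζ.injOn hA (mem_univ i)

theorem det_inv_sub_sq_ne_zero {ζ w : ι → F} (hζ : Function.Injective ζ)
    (hw : Function.Injective w) {a : F}
    (hcrit : ∀ j, (derivative ((X - C a) * nodal univ ζ)).eval (w j) = 0)
    (hreg : ∀ j, ((X - C a) * nodal univ ζ).eval (w j) ≠ 0) :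
    (Matrix.of fun i j => ((ζ i - w j) ^ 2)⁻¹).det ≠ 0 := by
  rw [Ne, ← Matrix.exists_vecMul_eq_zero_iff]
  rintro ⟨c, hc0, hc⟩
  refine hc0 (eq_zero_of_sum_mul_inv_sub_sq_eq_zero hζ hw hcrit hreg fun j => ?_)
  simpa [Matrix.vecMul, dotProduct] using congrFun hc j

end Lagrange

/-- Let `p` have degree `n ≥ 2` with `p` and `p'` having only simple zeros,
zeros of `p` being `z₁, …, z_n` and zeros of `p'` being `w₁, …, w_{n-1}` (here recorded by
injective enumerations exhausting all roots). Then the `(n-1) × (n-1)` matrix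
`B(p) = ((z_i - w_j)⁻²)` has nonzero determinant. -/
theorem stmt_10 (n : ℕ) (hn : 2 ≤ n) (p : Polynomial ℂ) (hdeg : p.natDegree = n)
    (z : Fin n → ℂ) (hzinj : Function.Injective z) (hz : ∀ i, p.eval (z i) = 0)
    (w : Fin (n - 1) → ℂ) (hwinj : Function.Injective w)
    (hw : ∀ j, (Polynomial.derivative p).eval (w j) = 0) :
    Matrix.det
      (Matrix.of fun i j : Fin (n - 1) =>
        ((z (Fin.castLE (Nat.sub_le n 1) i) - w j) ^ 2)⁻¹) ≠ 0 := by
  obtain ⟨m, rfl⟩ : ∃ m, n = m + 2 := ⟨n - 2, by omega⟩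
  have hp : p = C p.leadingCoeff * Lagrange.nodal univ z :=
    eq_C_leadingCoeff_mul_nodal hzinj (by rw [hdeg, Fintype.card_fin]) hz
  have hlc : p.leadingCoeff ≠ 0 := leadingCoeff_ne_zero.2 fun h => by simp [h] at hdeg
  have hcrit : ∀ j, (derivative (Lagrange.nodal univ z)).eval (w j) = 0 := fun j => by
    have := hw j
    rw [hp, derivative_C_mul, eval_mul, eval_C] at this
    exact (mul_eq_zero.1 this).resolve_left hlc
  have hsep : (Lagrange.nodal univ z).Separable := separable_prod_X_sub_C_iff.2 hzinj
  have hsplit : Lagrange.nodal univ z = (X - C (z (Fin.last _))) *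
      Lagrange.nodal univ fun i : Fin (m + 2 - 1) => z (Fin.castLE (Nat.sub_le (m + 2) 1) i) := by
    rw [Lagrange.nodal, Fin.prod_univ_castSucc, mul_comm]
    rfl
  rw [hsplit] at hcrit hsep
  exact Lagrange.det_inv_sub_sq_ne_zero (hzinj.comp (Fin.castLE_injective _)) hwinj hcrit
    fun j h => hsep.eval₂_derivative_ne_zero (RingHom.id ℂ) h (hcrit j)
end

section
/- Let θ ∈ ℝ, let n ≥ 3 and let p(z) = z^n + e^{iθ} z. Then |p|_0 = d(p), |p|_ζ < d(p) for every zero ζ ≠ 0 of p, and p is linearly inextensible. -/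
open Polynomial Complex

/-- `d(p) = max_{z : p(z)=0} min_{w : p'(w)=0} |z - w|`. -/
noncomputable def sendovD (p : Polynomial ℂ) : ℝ :=
  sSup {r : ℝ | ∃ z : ℂ, p.eval z = 0 ∧ r = critDist p z}

/-- The distance `Δ(p,q)`: minimum over all matchings (labelings with multiplicity) of the
zeros of `p` and `q` of the largest distance between matched zeros. -/
noncomputable def polyDelta (n : ℕ) (p q : Polynomial ℂ) : ℝ :=
  sInf {r : ℝ | ∃ z ζ : Fin n → ℂ,
    p = ∏ i, (Polynomial.X - Polynomial.C (z i)) ∧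
    q = ∏ i, (Polynomial.X - Polynomial.C (ζ i)) ∧
    r = sSup (Set.range fun i => dist (z i) (ζ i))}

/-- `p ∈ S_n` is linearly inextensible if `∃ ε > 0, C ≥ 0, κ > 0` such that
`d(q) ≤ d(p) + C·Δ(q,p)^{1+κ}` for every `q ∈ S_n` with `Δ(q,p) < ε`. -/
def LinInext (n : ℕ) (p : Polynomial ℂ) : Prop :=
  ∃ ε > (0 : ℝ), ∃ C : ℝ, 0 ≤ C ∧ ∃ κ : ℝ, 0 < κ ∧
    ∀ q ∈ Sset n, polyDelta n q p < ε →
      sendovD q ≤ sendovD p + C * polyDelta n q p ^ ((1 : ℝ) + κ)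

open ComplexConjugate

/-!
The critical points of `p = z ^ n + c z` (`‖c‖ = 1`) all lie on the circle of radius
`r = n ^ (-1 / (n - 1))`, and `1 / 2 < r` once `n ≥ 3`. So `|p|_0 = r`, while a zero `ζ ≠ 0`
(where `ζ ^ (n - 1) = -c`, so `‖ζ‖ = 1`) sees the critical point `r ζ` at distance `1 - r < r`;
hence `d(p) = r`.

Let the zeros `z i` of `q ∈ S_n` be matched within `s` to the zeros `ζ i` of `p`, with
`ζ i₀ = 0`. For `i ≠ i₀`, `|q'(r ζ i)| = |q'(r ζ i) - p'(r ζ i)| = O(s)`, so `q'` vanishes within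
`O(s ^ (1 / (n - 1)))` of `r ζ i`, and `|q|_{z i} ≤ s + (1 - r) + (r - 1 / 2) ≤ r` for small `s`.
For the zero near `0`, `|q'(z i₀)|² = ∏ |z i₀ - z j|² ≤ exp (∑ (s² - 2 Re (z i₀ * conj (z j))))`,
and the first-order term is `O(s²)` because the nonzero zeros of `p` sum to `0`. As
`n r ^ (n - 1) = 1`, this puts a zero of `q'` within `r exp (O(s²)) = r + O(s²)` of `z i₀`.
Hence `d(q) ≤ d(p) + 3 Δ(q, p) ^ 2`.
-/

namespace Polynomial

theorem exists_fin_prod_X_sub_C {K : Type*} [Field K] [IsAlgClosed K] {q : K[X]}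
    (hq : q.Monic) : ∃ z : Fin q.natDegree → K, q = ∏ i, (X - C (z i)) := by
  have hs := IsAlgClosed.splits q
  set l := q.roots.toList
  have hl : l.length = q.natDegree := by
    rw [Multiset.length_toList, splits_iff_card_roots.mp hs]
  refine ⟨fun i => l[i.cast hl.symm], ?_⟩
  conv_lhs => rw [hs.eq_prod_roots_of_monic hq, ← Multiset.coe_toList q.roots]
  rw [Multiset.map_coe, Multiset.prod_coe, ← Fin.prod_univ_fun_getElem]
  exact Fintype.prod_equiv (finCongr hl) _ _ fun _ => rfl

theorem exists_isRoot_norm_sub_pow_le {K : Type*} [NormedField K] [IsAlgClosed K] {f : K[X]}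
    (hf : 0 < f.natDegree) (x : K) :
    ∃ w, f.IsRoot w ∧ ‖f.leadingCoeff‖ * ‖x - w‖ ^ f.natDegree ≤ ‖f.eval x‖ := by
  classical
  have hs := IsAlgClosed.splits f
  have hcard : Multiset.card f.roots = f.natDegree := splits_iff_card_roots.mp hs
  have hne : f.roots.toFinset.Nonempty := by
    rw [Multiset.toFinset_nonempty, ← Multiset.card_pos, hcard]; exact hf
  obtain ⟨w, hw, hmin⟩ := f.roots.toFinset.exists_min_image (fun y => ‖x - y‖) hne
  rw [Multiset.mem_toFinset] at hw
  refine ⟨w, (mem_roots (ne_zero_of_natDegree_gt hf)).mp hw, ?_⟩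
  rw [hs.eval_eq_prod_roots, norm_mul]
  gcongr
  rw [← normHom_apply (_ : Multiset K).prod, map_multiset_prod, Multiset.map_map]
  calc ‖x - w‖ ^ f.natDegree = (f.roots.map fun _ => ‖x - w‖).prod := by
        rw [Multiset.map_const', Multiset.prod_replicate, hcard]
    _ ≤ _ := Multiset.prod_map_le_prod_map₀ _ _ (fun _ _ => norm_nonneg _)
        fun y hy => hmin y (Multiset.mem_toFinset.mpr hy)

theorem exists_isRoot_derivative_norm_sub_pow_le {q : ℂ[X]} (hq : q.Monic)
    (hd : 2 ≤ q.natDegree) (x : ℂ) :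
    ∃ w, (derivative q).eval w = 0 ∧
      q.natDegree * ‖x - w‖ ^ (q.natDegree - 1) ≤ ‖(derivative q).eval x‖ := by
  have hpos : 0 < (derivative q).natDegree := by rw [natDegree_derivative]; omega
  obtain ⟨w, hw, hle⟩ := exists_isRoot_norm_sub_pow_le hpos x
  refine ⟨w, hw, ?_⟩
  simpa [natDegree_derivative, hq.leadingCoeff] using hle

theorem eval_derivative_prod_X_sub_C {K : Type*} [CommRing K] {ι : Type*} [DecidableEq ι]
    (t : Finset ι) (z : ι → K) (x : K) :
    (derivative (∏ i ∈ t, (X - C (z i)))).eval x = ∑ i ∈ t, ∏ j ∈ t.erase i, (x - z j) := by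
  simp [derivative_prod_finset, eval_finsetSum, eval_prod]

theorem eval_derivative_prod_X_sub_C_self {R ι : Type*} [CommRing R] [DecidableEq ι]
    {t : Finset ι} (z : ι → R) {i : ι} (hi : i ∈ t) :
    (derivative (∏ j ∈ t, (X - C (z j)))).eval (z i) = ∏ j ∈ t.erase i, (z i - z j) := by
  rw [eval_derivative_prod_X_sub_C]
  refine Finset.sum_eq_single_of_mem i hi fun k _ hki =>
    Finset.prod_eq_zero (Finset.mem_erase.mpr ⟨hki.symm, hi⟩) (sub_self _)

theorem X_pow_add_C_mul_X_eq {R : Type*} [CommRing R] {n : ℕ} (hn : 1 ≤ n) (c : R) :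
    (X ^ n + C c * X : R[X]) = X * (X ^ (n - 1) + C c) := by
  rw [mul_add, ← pow_succ', Nat.sub_add_cancel hn, mul_comm]

theorem monic_X_pow_add_C_mul_X {R : Type*} [CommRing R] [Nontrivial R] {n : ℕ}
    (hn : 2 ≤ n) (c : R) : (X ^ n + C c * X : R[X]).Monic :=
  monic_X_pow_add (degree_C_mul_X_le c |>.trans_lt (by exact_mod_cast hn))

theorem natDegree_X_pow_add_C_mul_X {R : Type*} [CommRing R] [Nontrivial R] {n : ℕ}
    (hn : 2 ≤ n) (c : R) : (X ^ n + C c * X : R[X]).natDegree = n := by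
  rw [natDegree_add_eq_left_of_natDegree_lt, natDegree_X_pow]
  exact (natDegree_C_mul_le c X).trans_lt (by rw [natDegree_X, natDegree_X_pow]; omega)

theorem exists_eq_zero_prod_erase_eq {R ι : Type*} [CommRing R] [IsDomain R]
    [Fintype ι] [DecidableEq ι] {g : R[X]} {ζ : ι → R} (h : X * g = ∏ i, (X - C (ζ i))) :
    ∃ i₀, ζ i₀ = 0 ∧ ∏ j ∈ Finset.univ.erase i₀, (X - C (ζ j)) = g := by
  have hzero : ∏ i, (0 - ζ i) = 0 := by simpa [eval_prod] using (congrArg (eval 0) h).symm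
  obtain ⟨i₀, -, hi₀⟩ := Finset.prod_eq_zero_iff.mp hzero
  rw [zero_sub, neg_eq_zero] at hi₀
  refine ⟨i₀, hi₀, mul_left_cancel₀ X_ne_zero ?_⟩
  rw [h, ← Finset.mul_prod_erase _ _ (Finset.mem_univ i₀), hi₀, C_0, sub_zero]

end Polynomial

theorem Nat.lt_two_pow_pred {n : ℕ} (hn : 3 ≤ n) : n < 2 ^ (n - 1) := by
  induction n, hn using Nat.le_induction with
  | base => norm_num
  | succ m hm ih =>
    have : 2 ^ m = 2 ^ (m - 1) * 2 := by rw [← pow_succ]; congr; omega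
    rw [Nat.add_sub_cancel, this]; omega

theorem Real.exp_le_one_add_two_mul {x : ℝ} (hx₀ : 0 ≤ x) (hx₁ : x ≤ 1) :
    Real.exp x ≤ 1 + 2 * x := by
  have := Real.abs_exp_sub_one_le (abs_le.mpr ⟨by linarith, hx₁⟩)
  rw [abs_of_nonneg hx₀] at this
  linarith [le_abs_self (Real.exp x - 1)]

theorem norm_prod_sub_prod_le {R ι : Type*} [NormedCommRing R] [NormOneClass R] [DecidableEq ι]
    (t : Finset ι) (f g : ι → R) {M : ℝ} (hM : 1 ≤ M)
    (hf : ∀ i ∈ t, ‖f i‖ ≤ M) (hg : ∀ i ∈ t, ‖g i‖ ≤ M) :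
    ‖∏ i ∈ t, f i - ∏ i ∈ t, g i‖ ≤ (∑ i ∈ t, ‖f i - g i‖) * M ^ t.card := by
  induction t using Finset.induction with
  | empty => simp
  | insert c t hc ih =>
    rw [Finset.forall_mem_insert] at hf hg
    have hgt : ‖∏ i ∈ t, g i‖ ≤ M ^ t.card :=
      (Finset.norm_prod_le _ _).trans <|
        (Finset.prod_le_prod (fun _ _ => norm_nonneg _) hg.2).trans_eq (Finset.prod_const M)
    have ih := ih hf.2 hg.2
    rw [Finset.prod_insert hc, Finset.prod_insert hc, Finset.sum_insert hc,
      Finset.card_insert_of_notMem hc, pow_succ]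
    have hd : 0 ≤ ‖f c - g c‖ := norm_nonneg _
    have hMt : 0 ≤ M ^ t.card := by positivity
    calc ‖f c * ∏ i ∈ t, f i - g c * ∏ i ∈ t, g i‖
        = ‖f c * (∏ i ∈ t, f i - ∏ i ∈ t, g i) + (f c - g c) * ∏ i ∈ t, g i‖ := by ring_nf
      _ ≤ ‖f c‖ * ‖∏ i ∈ t, f i - ∏ i ∈ t, g i‖ + ‖f c - g c‖ * ‖∏ i ∈ t, g i‖ :=
        (norm_add_le _ _).trans (add_le_add (norm_mul_le _ _) (norm_mul_le _ _))
      _ ≤ M * ((∑ i ∈ t, ‖f i - g i‖) * M ^ t.card) + ‖f c - g c‖ * M ^ t.card := by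
        gcongr
        exact hf.1
      _ ≤ (‖f c - g c‖ + ∑ i ∈ t, ‖f i - g i‖) * (M ^ t.card * M) := by
        nlinarith [mul_nonneg (mul_nonneg hd hMt) (sub_nonneg.mpr hM)]

theorem norm_prod_sub_sq_le_exp {ι : Type*} (t : Finset ι) {a : ℂ} {z : ι → ℂ} {s : ℝ}
    (ha : ‖a‖ ≤ s) (hz : ∀ j ∈ t, ‖z j‖ ≤ 1) (hsum : ‖∑ j ∈ t, z j‖ ≤ t.card * s) :
    ‖∏ j ∈ t, (a - z j)‖ ^ 2 ≤ Real.exp (3 * t.card * s ^ 2) := by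
  have ha2 : ‖a‖ ^ 2 ≤ s ^ 2 := pow_le_pow_left₀ (norm_nonneg a) ha 2
  have hterm : ∀ j ∈ t, ‖a - z j‖ ^ 2 ≤ Real.exp (s ^ 2 - 2 * (a * conj (z j)).re) := by
    intro j hj
    refine le_trans ?_ (Real.add_one_le_exp _)
    rw [Complex.sq_norm, Complex.normSq_sub, ← Complex.sq_norm, ← Complex.sq_norm]
    nlinarith [hz j hj, norm_nonneg (z j)]
  have hre : -(a * conj (∑ j ∈ t, z j)).re ≤ t.card * s ^ 2 := by
    have := neg_abs_le (a * conj (∑ j ∈ t, z j)).re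
    have := Complex.abs_re_le_norm (a * conj (∑ j ∈ t, z j))
    rw [norm_mul, Complex.norm_conj] at this
    nlinarith [mul_le_mul ha hsum (norm_nonneg _) ((norm_nonneg a).trans ha)]
  calc ‖∏ j ∈ t, (a - z j)‖ ^ 2 = ∏ j ∈ t, ‖a - z j‖ ^ 2 := by rw [norm_prod, Finset.prod_pow]
    _ ≤ ∏ j ∈ t, Real.exp (s ^ 2 - 2 * (a * conj (z j)).re) :=
      Finset.prod_le_prod (fun _ _ => by positivity) hterm
    _ = Real.exp (t.card * s ^ 2 - 2 * (a * conj (∑ j ∈ t, z j)).re) := by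
      rw [← Real.exp_sum, Finset.sum_sub_distrib, Finset.sum_const, nsmul_eq_mul, map_sum,
        Finset.mul_sum, Complex.re_sum, Finset.mul_sum]
    _ ≤ Real.exp (3 * t.card * s ^ 2) := by gcongr; linarith

theorem le_apply_sInf_of_forall_mem_lt {S : Set ℝ} {ε D : ℝ} {g : ℝ → ℝ} (hg : Continuous g)
    (hne : S.Nonempty) (hbdd : BddBelow S) (hS : sInf S < ε)
    (h : ∀ s ∈ S, s < ε → D ≤ g s) : D ≤ g (sInf S) := by
  obtain ⟨u, -, hu, huS⟩ := exists_seq_tendsto_sInf hne hbdd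
  refine ge_of_tendsto ((hg.tendsto _).comp hu) ?_
  filter_upwards [hu.eventually (gt_mem_nhds hS)] with k hk using h _ (huS k) hk

theorem critDist_le {p : ℂ[X]} {α w : ℂ} (hw : (derivative p).eval w = 0) :
    critDist p α ≤ dist α w :=
  csInf_le ⟨0, fun _ ⟨_, _, hr⟩ => hr ▸ dist_nonneg⟩ ⟨w, hw, rfl⟩

theorem le_critDist {p : ℂ[X]} {α : ℂ} {r : ℝ} (hne : ∃ w, (derivative p).eval w = 0)
    (h : ∀ w, (derivative p).eval w = 0 → r ≤ dist α w) : r ≤ critDist p α := by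
  obtain ⟨w, hw⟩ := hne
  exact le_csInf ⟨_, w, hw, rfl⟩ fun _ ⟨w, hw, hr⟩ => hr ▸ h w hw

theorem sendovD_le {p : ℂ[X]} {B : ℝ} (hB : 0 ≤ B) (h : ∀ z, p.eval z = 0 → critDist p z ≤ B) :
    sendovD p ≤ B :=
  Real.sSup_le (fun _ ⟨z, hz, hr⟩ => hr ▸ h z hz) hB

theorem sendovD_eq {p : ℂ[X]} {z : ℂ} (hz : p.eval z = 0)
    (h : ∀ y, p.eval y = 0 → critDist p y ≤ critDist p z) : sendovD p = critDist p z :=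
  IsGreatest.csSup_eq ⟨⟨z, hz, rfl⟩, fun _ ⟨y, hy, hr⟩ => hr ▸ h y hy⟩

noncomputable def critRadius (n : ℕ) : ℝ := (n : ℝ)⁻¹ ^ ((↑(n - 1) : ℝ)⁻¹)

theorem critRadius_pos {n : ℕ} (hn : 0 < n) : 0 < critRadius n := by
  unfold critRadius; positivity

theorem critRadius_le_one (n : ℕ) : critRadius n ≤ 1 :=
  Real.rpow_le_one (by positivity) (Nat.cast_inv_le_one n) (by positivity)

theorem critRadius_pow {n : ℕ} (hn : 2 ≤ n) : critRadius n ^ (n - 1) = (n : ℝ)⁻¹ :=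
  Real.rpow_inv_natCast_pow (by positivity) (by omega)

theorem half_lt_critRadius {n : ℕ} (hn : 3 ≤ n) : 1 / 2 < critRadius n := by
  refine lt_of_pow_lt_pow_left₀ (n - 1) (critRadius_pos (by omega)).le ?_
  rw [critRadius_pow (by omega), div_pow, one_pow, one_div]
  gcongr
  exact_mod_cast Nat.lt_two_pow_pred hn

theorem critDist_prod_X_sub_C_le_of_norm_le {n : ℕ} (hn : 2 ≤ n) {z : Fin n → ℂ}
    (hz : ∀ i, ‖z i‖ ≤ 1) {i₀ : Fin n} {s : ℝ} (h₀ : ‖z i₀‖ ≤ s)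
    (hsum : ‖∑ j ∈ Finset.univ.erase i₀, z j‖ ≤ (n - 1 : ℕ) * s) (hs : s ≤ 1 / 2) :
    critDist (∏ i, (X - C (z i))) (z i₀) ≤ critRadius n + 3 * s ^ 2 := by
  have hcard : (Finset.univ.erase i₀).card = n - 1 := by simp
  have hdeg : (∏ i, (X - C (z i))).natDegree = n := by simp
  obtain ⟨w, hw, hle⟩ := exists_isRoot_derivative_norm_sub_pow_le (monic_prod_X_sub_C z _)
    (hdeg ▸ hn) (z i₀)
  rw [hdeg, eval_derivative_prod_X_sub_C_self z (Finset.mem_univ i₀)] at hle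
  have hsq := norm_prod_sub_sq_le_exp _ h₀ (fun j _ => hz j) (hcard ▸ hsum)
  rw [hcard] at hsq
  have hnr : (n : ℝ) * (critRadius n * Real.exp (3 / 2 * s ^ 2)) ^ (n - 1)
      = Real.exp (3 / 2 * (n - 1 : ℕ) * s ^ 2) := by
    rw [mul_pow, critRadius_pow hn, ← Real.exp_nat_mul, ← mul_assoc,
      mul_inv_cancel₀ (by positivity), one_mul]
    congr 1
    ring
  have hprod : ‖∏ j ∈ Finset.univ.erase i₀, (z i₀ - z j)‖
      ≤ Real.exp (3 / 2 * (n - 1 : ℕ) * s ^ 2) := by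
    rw [← pow_le_pow_iff_left₀ (norm_nonneg _) (Real.exp_pos _).le two_ne_zero,
      ← Real.exp_nat_mul]
    exact hsq.trans_eq (congrArg Real.exp (by push_cast; ring))
  have hdist : dist (z i₀) w ≤ critRadius n * Real.exp (3 / 2 * s ^ 2) := by
    rw [dist_eq_norm, ← pow_le_pow_iff_left₀ (norm_nonneg _)
      (by positivity [critRadius_pos (n := n) (by omega)]) (show n - 1 ≠ 0 by omega),
      ← mul_le_mul_iff_of_pos_left (show (0 : ℝ) < n by positivity), hnr]
    exact hle.trans hprod
  have hexp := Real.exp_le_one_add_two_mul (x := 3 / 2 * s ^ 2) (by positivity)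
    (by nlinarith [norm_nonneg (z i₀)])
  calc critDist (∏ i, (X - C (z i))) (z i₀) ≤ dist (z i₀) w := critDist_le hw
    _ ≤ critRadius n * (1 + 2 * (3 / 2 * s ^ 2)) :=
      hdist.trans (mul_le_mul_of_nonneg_left hexp (critRadius_pos (by omega)).le)
    _ ≤ critRadius n + 3 * s ^ 2 := by nlinarith [critRadius_le_one n]

theorem norm_eval_derivative_prod_X_sub_C_sub_le {n : ℕ} {z ζ : Fin n → ℂ} {x : ℂ} {s : ℝ}
    (hx : ‖x‖ ≤ 1) (hz : ∀ i, ‖z i‖ ≤ 1) (hζ : ∀ i, ‖ζ i‖ ≤ 1)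
    (hs : ∀ i, dist (z i) (ζ i) ≤ s) :
    ‖(derivative (∏ i, (X - C (z i)))).eval x - (derivative (∏ i, (X - C (ζ i)))).eval x‖
      ≤ n * ((n - 1 : ℕ) * s * 2 ^ (n - 1)) := by
  have hM : ∀ y : ℂ, ‖y‖ ≤ 1 → ‖x - y‖ ≤ 2 := fun y hy => by
    linarith [norm_sub_le x y]
  rw [eval_derivative_prod_X_sub_C, eval_derivative_prod_X_sub_C, ← Finset.sum_sub_distrib]
  refine (norm_sum_le _ _).trans ?_
  refine (Finset.sum_le_card_nsmul _ _ ((n - 1 : ℕ) * s * 2 ^ (n - 1)) fun k _ => ?_).trans_eq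
    (by simp)
  have hcard : (Finset.univ.erase k).card = n - 1 := by simp
  refine (norm_prod_sub_prod_le _ _ _ one_le_two (fun j _ => hM _ (hz j))
    fun j _ => hM _ (hζ j)).trans ?_
  rw [hcard]
  gcongr
  calc ∑ j ∈ Finset.univ.erase k, ‖x - z j - (x - ζ j)‖
      ≤ ∑ j ∈ Finset.univ.erase k, s := Finset.sum_le_sum fun j _ => by
        rw [sub_sub_sub_cancel_left, ← dist_eq_norm, dist_comm]; exact hs j
    _ = (n - 1 : ℕ) * s := by rw [Finset.sum_const, hcard, nsmul_eq_mul]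

theorem le_of_polyDelta_lt {n : ℕ} {p q : ℂ[X]} (hp : p.Monic) (hpn : p.natDegree = n)
    (hq : q.Monic) (hqn : q.natDegree = n) {ε D : ℝ} {g : ℝ → ℝ} (hg : Continuous g)
    (hlt : polyDelta n q p < ε)
    (h : ∀ (z ζ : Fin n → ℂ) (s : ℝ), q = ∏ i, (X - C (z i)) → p = ∏ i, (X - C (ζ i)) →
      (∀ i, dist (z i) (ζ i) ≤ s) → s < ε → D ≤ g s) :
    D ≤ g (polyDelta n q p) := by
  obtain ⟨z, hz⟩ : ∃ z : Fin n → ℂ, q = ∏ i, (X - C (z i)) :=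
    hqn ▸ exists_fin_prod_X_sub_C hq
  obtain ⟨ζ, hζ⟩ : ∃ ζ : Fin n → ℂ, p = ∏ i, (X - C (ζ i)) :=
    hpn ▸ exists_fin_prod_X_sub_C hp
  refine le_apply_sInf_of_forall_mem_lt hg ⟨_, z, ζ, hz, hζ, rfl⟩ ⟨0, ?_⟩ hlt ?_
  · rintro _ ⟨z, ζ, -, -, rfl⟩
    exact Real.sSup_nonneg (by rintro _ ⟨i, rfl⟩; exact dist_nonneg)
  · rintro _ ⟨z, ζ, hz, hζ, rfl⟩ hs
    exact h z ζ _ hz hζ (fun i => le_csSup (Set.finite_range _).bddAbove ⟨i, rfl⟩) hs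

section XPowAddCMulX

variable {n : ℕ} {c : ℂ}

theorem eval_derivative_X_pow_add_C_mul_X (w : ℂ) :
    (derivative (X ^ n + C c * X)).eval w = n * w ^ (n - 1) + c := by
  simp [derivative_X_pow]

theorem eval_derivative_X_pow_add_C_mul_X_eq_zero_iff (hn : n ≠ 0) {w : ℂ} :
    (derivative (X ^ n + C c * X)).eval w = 0 ↔ w ^ (n - 1) = -c / n := by
  rw [eval_derivative_X_pow_add_C_mul_X, eq_div_iff (Nat.cast_ne_zero.mpr hn)]
  constructor <;> intro h <;> linear_combination h

theorem norm_eq_critRadius_of_eval_derivative_eq_zero (hn : 2 ≤ n) (hc : ‖c‖ = 1) {w : ℂ}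
    (hw : (derivative (X ^ n + C c * X)).eval w = 0) : ‖w‖ = critRadius n := by
  rw [eval_derivative_X_pow_add_C_mul_X_eq_zero_iff (by omega)] at hw
  refine (pow_left_inj₀ (norm_nonneg _) (critRadius_pos (by omega)).le
    (show n - 1 ≠ 0 by omega)).mp ?_
  rw [critRadius_pow hn, ← norm_pow, hw, norm_div, norm_neg, hc, norm_natCast, one_div]

theorem eval_derivative_X_pow_add_C_mul_X_critRadius_mul (hn : 2 ≤ n) {ζ : ℂ}
    (hζ : ζ ^ (n - 1) = -c) : (derivative (X ^ n + C c * X)).eval (critRadius n * ζ) = 0 := by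
  rw [eval_derivative_X_pow_add_C_mul_X_eq_zero_iff (by omega), mul_pow, ← Complex.ofReal_pow,
    critRadius_pow hn, hζ]
  push_cast
  ring

theorem exists_eval_derivative_X_pow_add_C_mul_X_eq_zero (hn : 2 ≤ n) :
    ∃ w, (derivative (X ^ n + C c * X)).eval w = 0 := by
  obtain ⟨ζ, hζ⟩ := IsAlgClosed.exists_pow_nat_eq (-c) (show 0 < n - 1 by omega)
  exact ⟨_, eval_derivative_X_pow_add_C_mul_X_critRadius_mul hn hζ⟩

theorem critDist_X_pow_add_C_mul_X_zero (hn : 2 ≤ n) (hc : ‖c‖ = 1) :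
    critDist (X ^ n + C c * X) 0 = critRadius n := by
  have hdist : ∀ w, (derivative (X ^ n + C c * X)).eval w = 0 → dist 0 w = critRadius n :=
    fun w hw => by rw [dist_zero_left, norm_eq_critRadius_of_eval_derivative_eq_zero hn hc hw]
  obtain ⟨w, hw⟩ := exists_eval_derivative_X_pow_add_C_mul_X_eq_zero (c := c) hn
  exact le_antisymm ((critDist_le hw).trans_eq (hdist w hw))
    (le_critDist ⟨w, hw⟩ fun w hw => (hdist w hw).ge)

theorem pow_pred_eq_neg_of_eval_X_pow_add_C_mul_X_eq_zero (hn : 1 ≤ n) {ζ : ℂ}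
    (hζ : (X ^ n + C c * X).eval ζ = 0) (h0 : ζ ≠ 0) : ζ ^ (n - 1) = -c := by
  rw [X_pow_add_C_mul_X_eq hn, eval_mul, eval_X, mul_eq_zero, or_iff_right h0] at hζ
  simpa [add_eq_zero_iff_eq_neg] using hζ

theorem norm_eq_one_of_pow_eq_neg (hn : 2 ≤ n) (hc : ‖c‖ = 1) {ζ : ℂ}
    (hζ : ζ ^ (n - 1) = -c) : ‖ζ‖ = 1 := by
  rw [← pow_eq_one_iff_of_nonneg (norm_nonneg ζ) (show n - 1 ≠ 0 by omega), ← norm_pow, hζ,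
    norm_neg, hc]

theorem dist_critRadius_mul (hn : 2 ≤ n) (hc : ‖c‖ = 1) {ζ : ℂ} (hζ : ζ ^ (n - 1) = -c) :
    dist ζ (critRadius n * ζ) = 1 - critRadius n := by
  rw [dist_eq_norm, ← one_sub_mul, norm_mul, norm_eq_one_of_pow_eq_neg hn hc hζ, mul_one,
    ← Complex.ofReal_one, ← Complex.ofReal_sub, Complex.norm_real, Real.norm_of_nonneg]
  linarith [critRadius_le_one n]

theorem critDist_X_pow_add_C_mul_X_lt (hn : 3 ≤ n) (hc : ‖c‖ = 1) {ζ : ℂ}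
    (hζ : (X ^ n + C c * X).eval ζ = 0) (h0 : ζ ≠ 0) :
    critDist (X ^ n + C c * X) ζ < critRadius n := by
  have hζ' := pow_pred_eq_neg_of_eval_X_pow_add_C_mul_X_eq_zero (by omega) hζ h0
  calc critDist (X ^ n + C c * X) ζ ≤ dist ζ (critRadius n * ζ) :=
        critDist_le (eval_derivative_X_pow_add_C_mul_X_critRadius_mul (by omega) hζ')
    _ = 1 - critRadius n := dist_critRadius_mul (by omega) hc hζ'
    _ < critRadius n := by linarith [half_lt_critRadius hn]

theorem sendovD_X_pow_add_C_mul_X (hn : 3 ≤ n) (hc : ‖c‖ = 1) :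
    sendovD (X ^ n + C c * X) = critRadius n := by
  rw [← critDist_X_pow_add_C_mul_X_zero (by omega) hc]
  refine sendovD_eq (by simp [zero_pow (show n ≠ 0 by omega)]) fun ζ hζ => ?_
  rcases eq_or_ne ζ 0 with rfl | h0
  · exact le_rfl
  · rw [critDist_X_pow_add_C_mul_X_zero (by omega) hc]
    exact (critDist_X_pow_add_C_mul_X_lt hn hc hζ h0).le

theorem exists_eq_zero_and_pow_eq_neg_of_X_pow_add_C_mul_X_eq_prod {ι : Type*} [Fintype ι]
    [DecidableEq ι] (hn : 3 ≤ n) {ζ : ι → ℂ} (hp : X ^ n + C c * X = ∏ i, (X - C (ζ i))) :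
    ∃ i₀, ζ i₀ = 0 ∧ (∀ j ≠ i₀, ζ j ^ (n - 1) = -c) ∧ ∑ j ∈ Finset.univ.erase i₀, ζ j = 0 := by
  rw [X_pow_add_C_mul_X_eq (by omega)] at hp
  obtain ⟨i₀, hi₀, hprod⟩ := exists_eq_zero_prod_erase_eq hp
  refine ⟨i₀, hi₀, fun j hj => ?_, ?_⟩
  · have := congrArg (eval (ζ j)) hprod
    rw [eval_prod, Finset.prod_eq_zero (Finset.mem_erase.mpr ⟨hj, Finset.mem_univ j⟩)
      (by simp)] at this
    simpa [eq_neg_iff_add_eq_zero] using this.symm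
  · have hnext := prod_X_sub_C_nextCoeff (s := Finset.univ.erase i₀) ζ
    rw [hprod, nextCoeff_of_natDegree_pos (by rw [natDegree_X_pow_add_C]; omega),
      natDegree_X_pow_add_C, coeff_add, coeff_X_pow, coeff_C, if_neg (by omega),
      if_neg (by omega), add_zero] at hnext
    exact neg_eq_zero.mp hnext.symm

theorem critDist_prod_X_sub_C_le_critRadius (hn : 3 ≤ n) (hc : ‖c‖ = 1)
    {z ζ : Fin n → ℂ} (hp : X ^ n + C c * X = ∏ i, (X - C (ζ i)))
    (hz : ∀ i, ‖z i‖ ≤ 1) (hζ : ∀ i, ‖ζ i‖ ≤ 1) {s : ℝ} (hs : ∀ i, dist (z i) (ζ i) ≤ s)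
    (hs₁ : s ≤ critRadius n - 1 / 2)
    (hs₂ : (n - 1 : ℕ) * s * 2 ^ (n - 1) ≤ (critRadius n - 1 / 2) ^ (n - 1))
    {i : Fin n} (hi : ζ i ^ (n - 1) = -c) :
    critDist (∏ i, (X - C (z i))) (z i) ≤ critRadius n := by
  have hr := half_lt_critRadius hn
  set x : ℂ := critRadius n * ζ i
  have hx : ‖x‖ ≤ 1 := by
    rw [norm_mul, Complex.norm_real, Real.norm_of_nonneg (by linarith),
      norm_eq_one_of_pow_eq_neg (by omega) hc hi, mul_one]
    exact critRadius_le_one n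
  have hpx : (derivative (∏ i, (X - C (ζ i)))).eval x = 0 :=
    hp ▸ eval_derivative_X_pow_add_C_mul_X_critRadius_mul (by omega) hi
  have hqx := norm_eval_derivative_prod_X_sub_C_sub_le hx hz hζ hs
  rw [hpx, sub_zero] at hqx
  have hdeg : (∏ i, (X - C (z i))).natDegree = n := by simp
  obtain ⟨w, hw, hle⟩ := exists_isRoot_derivative_norm_sub_pow_le
    (monic_prod_X_sub_C z Finset.univ) (by rw [hdeg]; omega) x
  rw [hdeg] at hle
  have hxw : dist x w ≤ critRadius n - 1 / 2 := by
    rw [dist_eq_norm, ← pow_le_pow_iff_left₀ (norm_nonneg _) (by linarith)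
      (show n - 1 ≠ 0 by omega), ← mul_le_mul_iff_of_pos_left (show (0 : ℝ) < n by positivity)]
    exact hle.trans (hqx.trans (mul_le_mul_of_nonneg_left hs₂ (by positivity)))
  calc critDist (∏ i, (X - C (z i))) (z i) ≤ dist (z i) w := critDist_le hw
    _ ≤ dist (z i) (ζ i) + dist (ζ i) x + dist x w := dist_triangle4 _ _ _ _
    _ ≤ s + (1 - critRadius n) + (critRadius n - 1 / 2) := by
      gcongr
      · exact hs i
      · exact (dist_critRadius_mul (by omega) hc hi).le
    _ ≤ critRadius n := by linarith

theorem sendovD_le_of_dist_le (hn : 3 ≤ n) (hc : ‖c‖ = 1) {q : ℂ[X]}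
    (hq : q ∈ Sset n) {z ζ : Fin n → ℂ} (hqz : q = ∏ i, (X - C (z i)))
    (hp : X ^ n + C c * X = ∏ i, (X - C (ζ i))) {s : ℝ} (hs : ∀ i, dist (z i) (ζ i) ≤ s)
    (hs₁ : s ≤ critRadius n - 1 / 2)
    (hs₂ : (n - 1 : ℕ) * s * 2 ^ (n - 1) ≤ (critRadius n - 1 / 2) ^ (n - 1)) :
    sendovD q ≤ critRadius n + 3 * s ^ 2 := by
  obtain ⟨i₀, hi₀, hroots, hsum⟩ :=
    exists_eq_zero_and_pow_eq_neg_of_X_pow_add_C_mul_X_eq_prod hn hp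
  have hz : ∀ i, ‖z i‖ ≤ 1 := fun i => hq.2.2 _ <| by
    rw [hqz, eval_prod]; exact Finset.prod_eq_zero (Finset.mem_univ i) (by simp)
  have hζ : ∀ i, ‖ζ i‖ ≤ 1 := fun i => by
    rcases eq_or_ne i i₀ with rfl | hi
    · simp [hi₀]
    · exact (norm_eq_one_of_pow_eq_neg (by omega) hc (hroots i hi)).le
  have h₀ : ‖z i₀‖ ≤ s := by simpa [hi₀] using hs i₀
  have hsum' : ‖∑ j ∈ Finset.univ.erase i₀, z j‖ ≤ (n - 1 : ℕ) * s := by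
    rw [← sub_zero (∑ j ∈ _, z j), ← hsum, ← Finset.sum_sub_distrib]
    refine (norm_sum_le _ _).trans ((Finset.sum_le_card_nsmul _ _ s fun j _ => ?_).trans_eq ?_)
    · rw [← dist_eq_norm]; exact hs j
    · simp
  have hr := half_lt_critRadius hn
  subst hqz
  refine sendovD_le (by positivity) fun y hy => ?_
  obtain ⟨i, -, hi⟩ := Finset.prod_eq_zero_iff.mp (by simpa [eval_prod] using hy)
  rw [sub_eq_zero.mp hi]
  rcases eq_or_ne i i₀ with rfl | hi
  · exact critDist_prod_X_sub_C_le_of_norm_le (by omega) hz h₀ hsum'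
      (by linarith [critRadius_le_one n])
  · exact (critDist_prod_X_sub_C_le_critRadius hn hc hp hz hζ hs hs₁ hs₂ (hroots i hi)).trans
      (by nlinarith)

theorem linInext_X_pow_add_C_mul_X (hn : 3 ≤ n) (hc : ‖c‖ = 1) :
    LinInext n (X ^ n + C c * X) := by
  have hδ : 0 < critRadius n - 1 / 2 := by linarith [half_lt_critRadius hn]
  have hK : (0 : ℝ) < (n - 1 : ℕ) * 2 ^ (n - 1) := by
    have : (0 : ℝ) < (n - 1 : ℕ) := by exact_mod_cast (show 0 < n - 1 by omega)
    positivity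
  refine ⟨min (critRadius n - 1 / 2)
    ((critRadius n - 1 / 2) ^ (n - 1) / ((n - 1 : ℕ) * 2 ^ (n - 1))), by positivity,
    3, by norm_num, 1, one_pos, fun q hq hlt => ?_⟩
  rw [sendovD_X_pow_add_C_mul_X hn hc, one_add_one_eq_two, Real.rpow_two]
  refine le_of_polyDelta_lt (monic_X_pow_add_C_mul_X (by omega) c)
    (natDegree_X_pow_add_C_mul_X (by omega) c) hq.1 hq.2.1 (by fun_prop) hlt
    fun z ζ s hz hζ hs hsε => sendovD_le_of_dist_le hn hc hq hz hζ hs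
      (hsε.le.trans (min_le_left _ _)) ?_
  have := (le_div_iff₀ hK).mp (hsε.le.trans (min_le_right _ _))
  linarith

end XPowAddCMulX

/-- For `θ ∈ ℝ`, `n ≥ 3` and `p(z) = zⁿ + e^{iθ} z`: `|p|₀ = d(p)`,
`|p|_ζ < d(p)` for every zero `ζ ≠ 0` of `p`, and `p` is linearly inextensible. -/
theorem stmt_12 (θ : ℝ) (n : ℕ) (hn : 3 ≤ n) (p : Polynomial ℂ)
    (hp : p = X ^ n + C (Complex.exp (θ * Complex.I)) * X) :
    critDist p 0 = sendovD p ∧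
    (∀ ζ : ℂ, p.eval ζ = 0 → ζ ≠ 0 → critDist p ζ < sendovD p) ∧
    LinInext n p := by
  have hc : ‖Complex.exp (θ * Complex.I)‖ = 1 := norm_exp_ofReal_mul_I θ
  subst hp
  rw [sendovD_X_pow_add_C_mul_X hn hc]
  exact ⟨critDist_X_pow_add_C_mul_X_zero (by omega) hc,
    fun ζ hζ h0 => critDist_X_pow_add_C_mul_X_lt hn hc hζ h0, linInext_X_pow_add_C_mul_X hn hc⟩
end

section
/- For every integer n ≥ 5 one has sin(π/(2(n-1)))/sin(π/n) < (1/n)^{1/(n-1)}. -/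
/-!
Put `m = n - 1` and `s = sin (π / (2m)) / sin (π / n)`; the claim is `s ^ m * n < 1`.
For `n ≥ 6`, the bounds `sin x < x` and `x - x³/6 < sin x` give `s < 13/20`, and
`(m + 1) (13/20)^m < 1` as soon as `m ≥ 5`. For `n = 5` the bound `13/20` is too weak, and we
use the closed forms of `sin (π/8)` and `cos (π/5)`, which reduce the claim to `9 + √5 < 8√2`.
-/

open Real

lemma lt_one_div_rpow_one_div_of_pow_mul_lt_one {s a : ℝ} {m : ℕ} (hs : 0 ≤ s) (ha : 0 < a)
    (hm : m ≠ 0) (h : s ^ m * a < 1) : s < (1 / a) ^ (1 / (m : ℝ)) := by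
  rw [one_div (m : ℝ), lt_rpow_inv_iff_of_pos hs (by positivity) (by positivity), rpow_natCast,
    lt_div_iff₀ ha]
  exact h

lemma sin_pi_div_pos {k : ℝ} (hk : 1 < k) : 0 < sin (π / k) :=
  sin_pos_of_pos_of_lt_pi (by positivity) (div_lt_self pi_pos hk)

lemma sin_pi_div_eight_sq : sin (π / 8) ^ 2 = (2 - √2) / 4 := by
  rw [sin_pi_div_eight, div_pow, sq_sqrt (sub_nonneg.2 (sqrt_le_iff.2 ⟨by norm_num, by norm_num⟩))]
  norm_num

lemma sin_pi_div_five_sq : sin (π / 5) ^ 2 = (10 - 2 * √5) / 16 := by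
  have h5 : √5 ^ 2 = 5 := sq_sqrt (by norm_num)
  nlinarith [sin_sq_add_cos_sq (π / 5), cos_pi_div_five]

lemma five_mul_sin_pi_div_eight_pow_four_lt : 5 * sin (π / 8) ^ 4 < sin (π / 5) ^ 4 := by
  have h2 : √2 ^ 2 = 2 := sq_sqrt (by norm_num)
  have h5 : √5 ^ 2 = 5 := sq_sqrt (by norm_num)
  have hsqrt : 9 + √5 < 8 * √2 := by
    have : √5 < 7 / 3 := by nlinarith [sqrt_nonneg 5]
    nlinarith [sqrt_nonneg 2, sqrt_nonneg 5]
  rw [show sin (π / 8) ^ 4 = (sin (π / 8) ^ 2) ^ 2 by ring,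
    show sin (π / 5) ^ 4 = (sin (π / 5) ^ 2) ^ 2 by ring, sin_pi_div_eight_sq, sin_pi_div_five_sq]
  nlinarith

lemma sin_pi_div_two_mul_lt {m : ℝ} (hm : 5 ≤ m) :
    sin (π / (2 * m)) < 13 / 20 * sin (π / (m + 1)) := by
  have hx : 0 < π / (m + 1) := by positivity
  have hx_le : π / (m + 1) ≤ 2 / 3 := by
    rw [div_le_iff₀ (by positivity)]; nlinarith [pi_le_four]
  calc sin (π / (2 * m)) < π / (2 * m) := sin_lt (by positivity)
    _ ≤ 3 / 5 * (π / (m + 1)) := by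
      rw [← mul_div_assoc, div_le_div_iff₀ (by positivity) (by positivity)]
      nlinarith [pi_pos]
    _ ≤ 13 / 20 * (π / (m + 1) - (π / (m + 1)) ^ 3 / 6) := by
      have hsq : (π / (m + 1)) ^ 2 ≤ 4 / 9 := by nlinarith
      nlinarith [mul_le_mul_of_nonneg_left hsq hx.le]
    _ < 13 / 20 * sin (π / (m + 1)) := by gcongr; exact sin_gt_sub_cube hx

lemma add_one_mul_pow_thirteen_div_twenty_lt_one {m : ℕ} (hm : 5 ≤ m) :
    ((m : ℝ) + 1) * (13 / 20) ^ m < 1 := by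
  induction m, hm using Nat.le_induction with
  | base => norm_num
  | succ k hk ih =>
    have hk' : (5 : ℝ) ≤ k := by exact_mod_cast hk
    have hpos : (0 : ℝ) < (13 / 20) ^ k := by positivity
    push_cast
    rw [pow_succ]
    nlinarith

lemma sin_ratio_pow_mul_lt_one {m : ℕ} (hm : 4 ≤ m) :
    (sin (π / (2 * m)) / sin (π / (m + 1))) ^ m * (m + 1) < 1 := by
  rcases hm.eq_or_lt with rfl | hm5
  · have h := five_mul_sin_pi_div_eight_pow_four_lt
    have hsin5 : 0 < sin (π / 5) := sin_pi_div_pos (by norm_num)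
    rw [show (2 : ℝ) * (4 : ℕ) = 8 by norm_num, show ((4 : ℕ) : ℝ) + 1 = 5 by norm_num, div_pow,
      div_mul_eq_mul_div, div_lt_one (by positivity)]
    linarith
  · have hm' : (5 : ℝ) ≤ m := by exact_mod_cast hm5
    have hden : 0 < sin (π / (m + 1)) := sin_pi_div_pos (by linarith)
    have hnum : 0 < sin (π / (2 * m)) := sin_pi_div_pos (by linarith)
    have hratio : sin (π / (2 * m)) / sin (π / (m + 1)) < 13 / 20 := by
      rw [div_lt_iff₀ hden]; exact sin_pi_div_two_mul_lt hm'
    calc (sin (π / (2 * m)) / sin (π / (m + 1))) ^ m * (m + 1)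
        < (13 / 20) ^ m * (m + 1) := by gcongr
      _ < 1 := by linarith [add_one_mul_pow_thirteen_div_twenty_lt_one hm5]

/-- For every integer `n ≥ 5`,
`sin(π/(2(n-1)))/sin(π/n) < (1/n)^{1/(n-1)}`. -/
theorem stmt_16 (n : ℕ) (hn : 5 ≤ n) :
    Real.sin (Real.pi / (2 * ((n : ℝ) - 1))) / Real.sin (Real.pi / n) <
      ((1 : ℝ) / n) ^ ((1 : ℝ) / ((n : ℝ) - 1)) := by
  obtain ⟨m, rfl⟩ : ∃ m, n = m + 1 := ⟨n - 1, by omega⟩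
  push_cast
  rw [add_sub_cancel_right]
  have hm : (4 : ℝ) ≤ m := by exact_mod_cast (by omega : 4 ≤ m)
  exact lt_one_div_rpow_one_div_of_pow_mul_lt_one
    (div_pos (sin_pi_div_pos (by linarith)) (sin_pi_div_pos (by linarith))).le (by positivity)
    (by omega)
    (sin_ratio_pow_mul_lt_one (by omega))
end
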